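/- arXiv:2203.04191 — 4 statements merged into one kernel-verified Lean document; each statement's English description precedes it below -/
import Mathlib

section
/- Let m ∈ ℕ and let f : ℝ → ℝ be continuous. If the map (x,h) ↦ δ^m_eq f(x;h) is bounded on bounded subsets of ℝ × (ℝ∖{0}), then for every j ≤ m the map (x,h) ↦ δ^j_eq f(x;h) is bounded on bounded subsets of ℝ × (ℝ∖{0}). -/
open Finset Function

/-- The equidistant difference quotient of order `m`:
`δ^m_eq f(x;h) = h^{-m} ∑_{i=0}^m (-1)^{m-i} C(m,i) f(x + i h)`. -/
noncomputable def deltaEq (m : ℕ) (f : ℝ → ℝ) (x h : ℝ) : ℝ :=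
  (∑ i ∈ Finset.range (m + 1), (-1 : ℝ) ^ (m - i) * (m.choose i) * f (x + i * h)) / h ^ m

lemma deltaEq_fwdDiff (j : ℕ) (f : ℝ → ℝ) (x h : ℝ) :
    deltaEq j f x h = (fwdDiff h)^[j] f x / h ^ j := by
  rw [deltaEq, fwdDiff_iter_eq_sum_shift]
  congr 1
  refine Finset.sum_congr rfl fun i _ => ?_
  simp only [zsmul_eq_mul, nsmul_eq_mul]
  push_cast
  ring

lemma fwdDiff_iter_shift (h : ℝ) (j : ℕ) (a : ℝ) :
    ∀ (f : ℝ → ℝ) (x : ℝ), (fwdDiff h)^[j] (fun y => f (y + a)) x = (fwdDiff h)^[j] f (x + a) := by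
  induction j with
  | zero => intro f x; simp
  | succ j IH =>
    intro f x
    rw [iterate_succ_apply, iterate_succ_apply]
    have e : fwdDiff h (fun y => f (y + a)) = fun y => fwdDiff h f (y + a) := by
      funext y; simp only [fwdDiff]; ring_nf
    rw [e, IH]

lemma telescope (h : ℝ) (j : ℕ) (f : ℝ → ℝ) (x : ℝ) :
    ∀ k : ℕ, (fwdDiff h)^[j] f (x + k * h) - (fwdDiff h)^[j] f x
      = ∑ p ∈ range k, (fwdDiff h)^[j+1] f (x + p * h) := by
  intro k
  induction k with
  | zero => simp
  | succ k IH =>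
    rw [Finset.sum_range_succ, ← IH, iterate_succ_apply' (fwdDiff h) j f]
    have e1 : x + (k : ℝ) * h + h = x + ((k : ℕ) + 1 : ℕ) * h := by push_cast; ring
    simp only [fwdDiff]
    rw [e1]
    ring

lemma binom_sum (g : ℕ → ℝ) (j : ℕ) :
    ∑ i ∈ range (j+1), (j.choose i : ℝ) * (g i + g (i+1))
      = ∑ i ∈ range (j+2), ((j+1).choose i : ℝ) * g i := by
  have e0 : ∑ i ∈ range (j+2), ((j+1).choose i : ℝ) * g i
      = (∑ i ∈ range (j+1), ((j+1).choose (i+1) : ℝ) * g (i+1)) + g 0 := by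
    rw [Finset.sum_range_succ' (fun i => ((j+1).choose i : ℝ) * g i) (j+1)]
    simp
  have e1 : ∑ i ∈ range (j+1), ((j+1).choose (i+1) : ℝ) * g (i+1)
      = (∑ i ∈ range (j+1), (j.choose i : ℝ) * g (i+1))
        + ∑ i ∈ range (j+1), (j.choose (i+1) : ℝ) * g (i+1) := by
    rw [← Finset.sum_add_distrib]
    refine Finset.sum_congr rfl fun i _ => ?_
    rw [Nat.choose_succ_succ]
    push_cast
    ring
  have e2 : (∑ i ∈ range (j+1), (j.choose (i+1) : ℝ) * g (i+1)) + g 0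
      = ∑ i ∈ range (j+1), (j.choose i : ℝ) * g i := by
    have := Finset.sum_range_succ' (fun i => (j.choose i : ℝ) * g i) (j+1)
    rw [Finset.sum_range_succ (fun i => (j.choose i : ℝ) * g i) (j+1)] at this
    simp only [Nat.choose_succ_self, Nat.cast_zero, zero_mul, add_zero, Nat.choose_zero_right,
      Nat.cast_one, one_mul] at this
    linarith [this]
  calc ∑ i ∈ range (j+1), (j.choose i : ℝ) * (g i + g (i+1))
      = (∑ i ∈ range (j+1), (j.choose i : ℝ) * g i)
        + ∑ i ∈ range (j+1), (j.choose i : ℝ) * g (i+1) := by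
        rw [← Finset.sum_add_distrib]; exact Finset.sum_congr rfl fun i _ => by ring
    _ = ∑ i ∈ range (j+2), ((j+1).choose i : ℝ) * g i := by rw [e0, e1]; linarith [e2]

lemma dbl (h : ℝ) (j : ℕ) : ∀ (f : ℝ → ℝ) (x : ℝ),
    (fwdDiff (2*h))^[j] f x
      = ∑ i ∈ range (j+1), (j.choose i : ℝ) * (fwdDiff h)^[j] f (x + i * h) := by
  induction j with
  | zero => intro f x; simp
  | succ j IH =>
    intro f x
    rw [iterate_succ_apply, IH (fwdDiff (2*h) f) x]
    have h2 : ∀ y : ℝ, (fwdDiff h)^[j] (fwdDiff (2*h) f) y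
        = (fwdDiff h)^[j+1] f y + (fwdDiff h)^[j+1] f (y + h) := by
      intro y
      have e : fwdDiff (2*h) f = fwdDiff h f + fun z => fwdDiff h f (z + h) := by
        funext z
        simp only [fwdDiff, Pi.add_apply]
        ring_nf
      rw [e, fwdDiff_iter_add, Pi.add_apply, fwdDiff_iter_shift h j h (fwdDiff h f) y,
        ← iterate_succ_apply]
    have e3 : ∀ i : ℕ, (fwdDiff h)^[j+1] f (x + i*h) + (fwdDiff h)^[j+1] f (x + i*h + h)
        = (fwdDiff h)^[j+1] f (x + i*h) + (fwdDiff h)^[j+1] f (x + (i+1:ℕ)*h) := by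
      intro i
      have : x + (i:ℝ)*h + h = x + ((i:ℕ)+1:ℕ) * h := by push_cast; ring
      rw [this]
    calc ∑ i ∈ range (j+1), (j.choose i : ℝ) * (fwdDiff h)^[j] (fwdDiff (2*h) f) (x + i*h)
        = ∑ i ∈ range (j+1), (j.choose i : ℝ)
            * ((fwdDiff h)^[j+1] f (x + i*h) + (fwdDiff h)^[j+1] f (x + (i+1:ℕ)*h)) := by
          refine Finset.sum_congr rfl fun i _ => ?_
          rw [h2, e3]
      _ = ∑ i ∈ range (j+1+1), ((j+1).choose i : ℝ) * (fwdDiff h)^[j+1] f (x + i*h) :=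
          binom_sum (fun i => (fwdDiff h)^[j+1] f (x + i*h)) j

lemma key_ineq (j : ℕ) (f : ℝ → ℝ) (x h B : ℝ) (hh : h ≠ 0) (hB0 : 0 ≤ B)
    (hB : ∀ p : ℕ, p ≤ j → |deltaEq (j+1) f (x + p * h) h| ≤ B) :
    |deltaEq j f x h| ≤ |deltaEq j f x (2*h)| + j * B * |h| := by
  have hhp : (0:ℝ) < |h| := abs_pos.mpr hh
  set D : ℕ → ℝ := fun p => (fwdDiff h)^[j+1] f (x + p * h) with hD
  have hDb : ∀ p : ℕ, p ≤ j → |D p| ≤ B * |h| ^ (j+1) := by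
    intro p hp
    have e : D p = deltaEq (j+1) f (x + p * h) h * h ^ (j+1) := by
      rw [deltaEq_fwdDiff, div_mul_cancel₀]
      exact pow_ne_zero _ hh
    rw [e, abs_mul, abs_pow]
    exact mul_le_mul_of_nonneg_right (hB p hp) (by positivity)
  set E : ℝ := ∑ i ∈ range (j+1), (j.choose i : ℝ) * ∑ p ∈ range i, D p with hE
  have key : deltaEq j f x (2*h) - deltaEq j f x h = E / (2^j * h^j) := by
    rw [deltaEq_fwdDiff, deltaEq_fwdDiff, dbl]
    have e1 : ∑ i ∈ range (j+1), (j.choose i : ℝ) * (fwdDiff h)^[j] f (x + i * h)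
        = 2^j * (fwdDiff h)^[j] f x + E := by
      have e2 : ∀ i ∈ range (j+1), (j.choose i : ℝ) * (fwdDiff h)^[j] f (x + i * h)
          = (j.choose i : ℝ) * (fwdDiff h)^[j] f x
            + (j.choose i : ℝ) * ∑ p ∈ range i, D p := by
        intro i _
        have := telescope h j f x i
        rw [← this]
        ring
      rw [Finset.sum_congr rfl e2, Finset.sum_add_distrib, ← Finset.sum_mul, hE]
      congr 2
      rw [← Nat.cast_sum, Nat.sum_range_choose]
      push_cast
      ring
    rw [e1, mul_pow]
    have h1 : (h:ℝ)^j ≠ 0 := pow_ne_zero _ hh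
    have h2 : (2:ℝ)^j ≠ 0 := by positivity
    field_simp
    ring
  have hEb : |E| ≤ 2^j * ((j:ℝ) * (B * |h|^(j+1))) := by
    calc |E| ≤ ∑ i ∈ range (j+1), |(j.choose i : ℝ) * ∑ p ∈ range i, D p| :=
          Finset.abs_sum_le_sum_abs _ _
      _ ≤ ∑ i ∈ range (j+1), (j.choose i : ℝ) * ((j:ℝ) * (B * |h|^(j+1))) := by
          refine Finset.sum_le_sum fun i hi => ?_
          rw [abs_mul, Nat.abs_cast]
          refine mul_le_mul_of_nonneg_left ?_ (Nat.cast_nonneg _)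
          have hi' : i ≤ j := Nat.lt_succ_iff.mp (Finset.mem_range.mp hi)
          calc |∑ p ∈ range i, D p| ≤ ∑ p ∈ range i, |D p| := Finset.abs_sum_le_sum_abs _ _
            _ ≤ ∑ _p ∈ range i, B * |h|^(j+1) := by
                refine Finset.sum_le_sum fun p hp => ?_
                exact hDb p (le_trans (Nat.le_of_lt_succ (Nat.lt_succ_of_lt
                  (lt_of_lt_of_le (Finset.mem_range.mp hp) hi'))) le_rfl)
            _ = i * (B * |h|^(j+1)) := by rw [Finset.sum_const, card_range, nsmul_eq_mul]
            _ ≤ j * (B * |h|^(j+1)) := by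
                refine mul_le_mul_of_nonneg_right ?_ (by positivity)
                exact_mod_cast hi'
      _ = 2^j * ((j:ℝ) * (B * |h|^(j+1))) := by
          rw [← Finset.sum_mul, ← Nat.cast_sum, Nat.sum_range_choose]
          push_cast; ring
  have habs : |deltaEq j f x (2*h) - deltaEq j f x h| ≤ (j:ℝ) * B * |h| := by
    rw [key, abs_div]
    have hden : |(2:ℝ)^j * h^j| = 2^j * |h|^j := by
      rw [abs_mul, abs_pow, abs_pow, abs_two]
    rw [hden]
    rw [div_le_iff₀ (by positivity)]
    calc |E| ≤ 2^j * ((j:ℝ) * (B * |h|^(j+1))) := hEb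
      _ = (j:ℝ) * B * |h| * (2^j * |h|^j) := by rw [pow_succ]; ring
  calc |deltaEq j f x h| ≤ |deltaEq j f x (2*h)| + |deltaEq j f x (2*h) - deltaEq j f x h| := by
        have := abs_sub_abs_le_abs_sub (deltaEq j f x h) (deltaEq j f x (2*h))
        have h3 : |deltaEq j f x h - deltaEq j f x (2*h)|
            = |deltaEq j f x (2*h) - deltaEq j f x h| := abs_sub_comm _ _
        linarith [abs_sub_abs_le_abs_sub (deltaEq j f x h) (deltaEq j f x (2*h)), h3 ▸ this]
    _ ≤ |deltaEq j f x (2*h)| + j * B * |h| := by linarith [habs]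

lemma coarse (j : ℕ) (f : ℝ → ℝ) (hf : Continuous f) (R : ℝ) (hR : 0 < R) :
    ∃ C : ℝ, ∀ x h : ℝ, |x| ≤ R → R ≤ |h| → |h| ≤ 2*R → |deltaEq j f x h| ≤ C := by
  obtain ⟨M, hM⟩ := (isCompact_Icc (a := -((2*(j:ℝ)+1)*R)) (b := (2*(j:ℝ)+1)*R)).exists_bound_of_continuousOn hf.continuousOn
  have hM0 : 0 ≤ M := le_trans (norm_nonneg _) (hM 0 (by constructor <;> nlinarith))
  refine ⟨(∑ i ∈ range (j+1), (j.choose i : ℝ)) * M / R^j, ?_⟩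
  intro x h hx hr h2
  rw [deltaEq, abs_div, abs_pow]
  have hnum : |∑ i ∈ range (j + 1), (-1 : ℝ) ^ (j - i) * (j.choose i) * f (x + i * h)|
      ≤ (∑ i ∈ range (j+1), (j.choose i : ℝ)) * M := by
    rw [Finset.sum_mul]
    calc |∑ i ∈ range (j + 1), (-1 : ℝ) ^ (j - i) * (j.choose i) * f (x + i * h)|
        ≤ ∑ i ∈ range (j + 1), |(-1 : ℝ) ^ (j - i) * (j.choose i) * f (x + i * h)| :=
          Finset.abs_sum_le_sum_abs _ _
      _ ≤ ∑ i ∈ range (j+1), (j.choose i : ℝ) * M := by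
          refine Finset.sum_le_sum fun i hi => ?_
          have hi' : (i:ℝ) ≤ j := by exact_mod_cast Nat.lt_succ_iff.mp (Finset.mem_range.mp hi)
          rw [abs_mul, abs_mul, abs_pow, abs_neg, abs_one, one_pow, one_mul, Nat.abs_cast]
          refine mul_le_mul_of_nonneg_left ?_ (Nat.cast_nonneg _)
          have harg : x + i * h ∈ Set.Icc (-((2*(j:ℝ)+1)*R)) ((2*(j:ℝ)+1)*R) := by
            have : |x + i * h| ≤ (2*(j:ℝ)+1)*R := by
              calc |x + i * h| ≤ |x| + |(i:ℝ)| * |h| := by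
                    rw [← abs_mul]; exact abs_add_le _ _
                _ ≤ R + (j:ℝ) * (2*R) := by
                    have : |(i:ℝ)| = (i:ℝ) := abs_of_nonneg (Nat.cast_nonneg _)
                    rw [this]
                    have h3 : (i:ℝ) * |h| ≤ (j:ℝ) * (2*R) := by
                      apply mul_le_mul hi' h2 (abs_nonneg _) (Nat.cast_nonneg _)
                    linarith
                _ = (2*(j:ℝ)+1)*R := by ring
            exact abs_le.mp this
          exact (Real.norm_eq_abs _) ▸ hM _ harg
  have hRj : (0:ℝ) < R^j := by positivity
  have hhj : R^j ≤ |h|^j := pow_le_pow_left₀ hR.le hr j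
  calc |∑ i ∈ range (j + 1), (-1 : ℝ) ^ (j - i) * (j.choose i) * f (x + i * h)| / |h|^j
      ≤ ((∑ i ∈ range (j+1), (j.choose i : ℝ)) * M) / |h|^j := by
        gcongr
    _ ≤ (∑ i ∈ range (j+1), (j.choose i : ℝ)) * M / R^j := by
        apply div_le_div_of_nonneg_left (by positivity) hRj hhj

lemma iterate_ineq (j : ℕ) (f : ℝ → ℝ) (R B : ℝ) (hR : 0 < R) (hB0 : 0 ≤ B)
    (hB : ∀ x h : ℝ, |x| ≤ ((j:ℝ)+2)*R → 0 < |h| → |h| ≤ R → |deltaEq (j+1) f x h| ≤ B) :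
    ∀ n : ℕ, ∀ x h : ℝ, |x| ≤ R → h ≠ 0 → 2^n * |h| ≤ 2*R →
      |deltaEq j f x h| ≤ |deltaEq j f x (2^n * h)| + j * B * (2^n * |h|) := by
  intro n
  induction n with
  | zero =>
    intro x h hx hh _
    have : (0:ℝ) ≤ (j:ℝ) * B * (2^0 * |h|) := by positivity
    simpa using by linarith [this, le_refl |deltaEq j f x (2^0*h)|,
      (by norm_num : ((2:ℝ)^0 * h) = h) ▸ le_refl (|deltaEq j f x h|)]
  | succ n IH =>
    intro x h hx hh hle
    have habs : |(2:ℝ)^n * h| = 2^n * |h| := by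
      rw [abs_mul, abs_pow, abs_two]
    have hhalf : 2^n * |h| ≤ R := by
      have : (2:ℝ)^(n+1) = 2 * 2^n := by ring
      rw [this] at hle
      linarith
    have h2R : 2^n * |h| ≤ 2*R := by linarith
    have hIH := IH x h hx hh h2R
    have hstep := key_ineq j f x (2^n * h) B (by positivity) hB0 ?_
    · have e2 : (2:ℝ) * (2^n * h) = 2^(n+1) * h := by ring
      rw [e2, habs] at hstep
      have e3 : (j:ℝ) * B * (2^(n+1) * |h|) = j*B*(2^n*|h|) + j*B*(2^n*|h|) := by ring
      rw [e3]
      linarith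
    · intro p hp
      apply hB
      · have : |x + p * (2^n * h)| ≤ |x| + (p:ℝ) * (2^n * |h|) := by
          calc |x + p * (2^n*h)| ≤ |x| + |(p:ℝ) * (2^n*h)| := abs_add_le _ _
            _ = |x| + (p:ℝ) * (2^n*|h|) := by
                rw [abs_mul, Nat.abs_cast, habs]
        have hp' : (p:ℝ) ≤ j := by exact_mod_cast hp
        have : |x + p * (2^n * h)| ≤ R + (j:ℝ) * R := by
          have h4 : (p:ℝ) * (2^n*|h|) ≤ (j:ℝ) * R :=
            mul_le_mul hp' hhalf (by positivity) (Nat.cast_nonneg _)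
          linarith
        nlinarith [hR]
      · rw [habs]; positivity
      · rw [habs]; exact hhalf

lemma step_down (j : ℕ) (f : ℝ → ℝ) (hf : Continuous f)
    (H : ∀ R : ℝ, 0 < R → ∃ C : ℝ, ∀ x h : ℝ, |x| ≤ R → 0 < |h| → |h| ≤ R →
      |deltaEq (j+1) f x h| ≤ C) :
    ∀ R : ℝ, 0 < R → ∃ C : ℝ, ∀ x h : ℝ, |x| ≤ R → 0 < |h| → |h| ≤ R →
      |deltaEq j f x h| ≤ C := by
  intro R hR
  obtain ⟨B₀, hB₀⟩ := H (((j:ℝ)+2)*R) (by positivity)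
  set B := max B₀ 0 with hBdef
  have hB0 : 0 ≤ B := le_max_right _ _
  obtain ⟨C1, hC1⟩ := coarse j f hf R hR
  refine ⟨C1 + j * B * (2*R), ?_⟩
  intro x h hx hh0 hhR
  have hh : h ≠ 0 := abs_pos.mp hh0
  obtain ⟨n, hn1, hn2⟩ : ∃ n : ℕ, R < 2^n * |h| ∧ 2^n * |h| ≤ 2*R := by
    have hex : ∃ n : ℕ, R < 2^n * |h| := by
      obtain ⟨n, hn⟩ := pow_unbounded_of_one_lt (R / |h|) (one_lt_two (α := ℝ))
      exact ⟨n, by rw [div_lt_iff₀ hh0] at hn; linarith⟩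
    classical
    refine ⟨Nat.find hex, Nat.find_spec hex, ?_⟩
    rcases Nat.eq_zero_or_pos (Nat.find hex) with h0 | hpos
    · rw [h0]; norm_num; linarith
    · obtain ⟨k, hk⟩ := Nat.exists_eq_succ_of_ne_zero (Nat.pos_iff_ne_zero.mp hpos)
      have := Nat.find_min hex (m := k) (by omega)
      push_neg at this
      rw [hk]
      have : (2:ℝ)^(k+1) = 2*2^k := by ring
      rw [this]
      nlinarith [Nat.find_min hex (m := k) (by omega), abs_nonneg h]
  have hBb : ∀ x' h' : ℝ, |x'| ≤ ((j:ℝ)+2)*R → 0 < |h'| → |h'| ≤ R →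
      |deltaEq (j+1) f x' h'| ≤ B := by
    intro x' h' a b c
    exact le_trans (hB₀ x' h' a b (by nlinarith [hR])) (le_max_left _ _)
  have hIt := iterate_ineq j f R B hR hB0 hBb n x h hx hh hn2
  have hcoarse : |deltaEq j f x (2^n * h)| ≤ C1 := by
    apply hC1 x _ hx
    · rw [abs_mul, abs_pow, abs_two]; exact hn1.le
    · rw [abs_mul, abs_pow, abs_two]; exact hn2
  have hmul : (j:ℝ) * B * (2^n * |h|) ≤ (j:ℝ) * B * (2*R) :=
    mul_le_mul_of_nonneg_left hn2 (by positivity)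
  linarith

/-- **Corollary 2.6.** If the equidistant difference quotient of order `m` of a continuous
function is bounded on bounded subsets of `ℝ × (ℝ \\ {0})`, then so are all difference quotients
of order `j ≤ m`. -/
theorem diff_quotient_bounded_of_le (m : ℕ) (f : ℝ → ℝ) (hf : Continuous f)
    (hbd : ∀ R : ℝ, 0 < R → ∃ C : ℝ, ∀ x h : ℝ, |x| ≤ R → 0 < |h| → |h| ≤ R →
      |deltaEq m f x h| ≤ C) :
    ∀ j ≤ m, ∀ R : ℝ, 0 < R → ∃ C : ℝ, ∀ x h : ℝ, |x| ≤ R → 0 < |h| → |h| ≤ R →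
      |deltaEq j f x h| ≤ C := by
  have hall : ∀ d : ℕ, ∀ R : ℝ, 0 < R → ∃ C : ℝ, ∀ x h : ℝ, |x| ≤ R → 0 < |h| → |h| ≤ R →
      |deltaEq (m - d) f x h| ≤ C := by
    intro d
    induction d with
    | zero => simpa using hbd
    | succ d ih =>
      rcases le_or_gt m d with hmd | hdm
      · have e1 : m - d = 0 := Nat.sub_eq_zero_of_le hmd
        have e2 : m - (d+1) = 0 := Nat.sub_eq_zero_of_le (le_trans hmd (Nat.le_succ d))
        rw [e2]; rw [e1] at ih; exact ih
      · have e : m - d = (m - (d+1)) + 1 := by omega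
        rw [e] at ih
        exact step_down (m - (d+1)) f hf ih
  intro j hj
  have := hall (m - j)
  rwa [Nat.sub_sub_self hj] at this
end

section
/- Let U ⊆ ℝ^d be open, let c ∈ C^∞(ℝ, U), and let m ∈ ℕ. For every f ∈ Z^{m,1}(U) the composite f ∘ c belongs to Z^{m,1}(ℝ). -/
open scoped ContDiff

/-- Partial derivative of `f` in the `i`-th coordinate direction. -/
noncomputable def pd (d : ℕ) (i : Fin d) (f : EuclideanSpace ℝ (Fin d) → ℝ) :
    EuclideanSpace ℝ (Fin d) → ℝ :=
  fun x => fderiv ℝ f x (EuclideanSpace.single i 1)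

/-- Iterated partial derivative `∂^γ f` for a multi-index `γ`. -/
noncomputable def pdMulti (d : ℕ) (γ : Fin d → ℕ) (f : EuclideanSpace ℝ (Fin d) → ℝ) :
    EuclideanSpace ℝ (Fin d) → ℝ :=
  (List.finRange d).foldr (fun i g => (pd d i)^[γ i] g) f

noncomputable def pdList (d : ℕ) (L : List (Fin d)) (f : EuclideanSpace ℝ (Fin d) → ℝ) :
    EuclideanSpace ℝ (Fin d) → ℝ :=
  L.foldr (fun i g => pd d i g) f

section pdbasic

variable {d : ℕ} {U : Set (EuclideanSpace ℝ (Fin d))} {f g : EuclideanSpace ℝ (Fin d) → ℝ}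

lemma pd_congr (hU : IsOpen U) (h : Set.EqOn f g U) (i : Fin d) :
    Set.EqOn (pd d i f) (pd d i g) U := by
  intro x hx
  have : f =ᶠ[nhds x] g := Filter.eventuallyEq_of_mem (hU.mem_nhds hx) h
  simp only [pd, this.fderiv_eq]

lemma pd_contDiffOn {n m : WithTop ℕ∞} (hU : IsOpen U) (hf : ContDiffOn ℝ n f U)
    (h : m + 1 ≤ n) (i : Fin d) : ContDiffOn ℝ m (pd d i f) U := by
  have h1 : ContDiffOn ℝ m (fun x => fderiv ℝ f x) U := hf.fderiv_of_isOpen hU h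
  have h2 := (ContinuousLinearMap.apply ℝ ℝ
    (EuclideanSpace.single i (1:ℝ))).contDiff.comp_contDiffOn h1
  exact h2

lemma pdList_cons (i : Fin d) (L : List (Fin d)) :
    pdList d (i :: L) f = pd d i (pdList d L f) := rfl

lemma pdList_append (L₁ L₂ : List (Fin d)) :
    pdList d (L₁ ++ L₂) f = pdList d L₁ (pdList d L₂ f) := by
  simp [pdList, List.foldr_append]

lemma pdList_contDiffOn (hU : IsOpen U) {n : WithTop ℕ∞} {m : WithTop ℕ∞}
    (hf : ContDiffOn ℝ n f U) :
    ∀ L : List (Fin d), m + L.length ≤ n → ContDiffOn ℝ m (pdList d L f) U := by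
  intro L
  induction L generalizing m with
  | nil => intro h; exact hf.of_le (by simpa using h)
  | cons i L IH =>
    intro h
    rw [pdList_cons]
    refine pd_contDiffOn hU (IH (m := m + 1) ?_) le_rfl i
    calc m + 1 + (L.length : WithTop ℕ∞) = m + ((i :: L).length : WithTop ℕ∞) := by
          push_cast [List.length_cons]
          ring
      _ ≤ n := h

lemma pdList_congr (hU : IsOpen U) (h : Set.EqOn f g U) :
    ∀ L : List (Fin d), Set.EqOn (pdList d L f) (pdList d L g) U := by
  intro L
  induction L with
  | nil => exact h
  | cons i L IH => exact pd_congr hU IH i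

lemma pd_comm (hU : IsOpen U) (hg : ContDiffOn ℝ 2 g U) (i j : Fin d) :
    Set.EqOn (pd d i (pd d j g)) (pd d j (pd d i g)) U := by
  intro x hx
  have hsymm : IsSymmSndFDerivAt ℝ g x :=
    (hg.contDiffAt (hU.mem_nhds hx)).isSymmSndFDerivAt (by simp)
  have hdiff : DifferentiableAt ℝ (fun y => fderiv ℝ g y) x := by
    have h1 : ContDiffOn ℝ 1 (fun y => fderiv ℝ g y) U :=
      hg.fderiv_of_isOpen hU (by norm_num)
    exact (h1.differentiableOn one_ne_zero).differentiableAt (hU.mem_nhds hx)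
  have key : ∀ w : EuclideanSpace ℝ (Fin d),
      pd d i (fun y => fderiv ℝ g y w) x = fderiv ℝ (fderiv ℝ g) x (EuclideanSpace.single i 1) w := by
    intro w
    have h1 : HasFDerivAt (fun y => fderiv ℝ g y w)
        ((ContinuousLinearMap.apply ℝ ℝ w).comp (fderiv ℝ (fderiv ℝ g) x)) x :=
      (ContinuousLinearMap.apply ℝ ℝ w).hasFDerivAt.comp x hdiff.hasFDerivAt
    simp only [pd, h1.fderiv]
    rfl
  show pd d i (pd d j g) x = pd d j (pd d i g) x
  have e1 : pd d i (pd d j g) x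
      = fderiv ℝ (fderiv ℝ g) x (EuclideanSpace.single i 1) (EuclideanSpace.single j 1) :=
    key _
  have e2 : pd d j (pd d i g) x
      = fderiv ℝ (fderiv ℝ g) x (EuclideanSpace.single j 1) (EuclideanSpace.single i 1) := by
    have h1 : HasFDerivAt (fun y => fderiv ℝ g y (EuclideanSpace.single i 1))
        ((ContinuousLinearMap.apply ℝ ℝ (EuclideanSpace.single i (1:ℝ))).comp
          (fderiv ℝ (fderiv ℝ g) x)) x :=
      (ContinuousLinearMap.apply ℝ ℝ (EuclideanSpace.single i (1:ℝ))).hasFDerivAt.comp x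
        hdiff.hasFDerivAt
    have e0 : pd d j (pd d i g) x
        = fderiv ℝ (fun y => fderiv ℝ g y (EuclideanSpace.single i 1)) x
            (EuclideanSpace.single j 1) := rfl
    rw [e0, h1.fderiv]
    rfl
  rw [e1, e2, hsymm]

end pdbasic

section perm

variable {d : ℕ} {U : Set (EuclideanSpace ℝ (Fin d))} {f g : EuclideanSpace ℝ (Fin d) → ℝ}

lemma pdList_perm (hU : IsOpen U) {n : ℕ} (hf : ContDiffOn ℝ n f U) :
    ∀ {L₁ L₂ : List (Fin d)}, L₁.Perm L₂ → L₁.length ≤ n →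
      Set.EqOn (pdList d L₁ f) (pdList d L₂ f) U := by
  intro L₁ L₂ hp
  induction hp with
  | nil => intro _; exact fun x _ => rfl
  | cons i h IH =>
    intro hlen
    have hlen' : _ ≤ n := le_trans (Nat.le_succ _) hlen
    exact pd_congr hU (IH hlen') i
  | swap i j L =>
    intro hlen
    have hG : ContDiffOn ℝ 2 (pdList d L f) U := by
      refine pdList_contDiffOn hU hf L ?_
      have : (2 + L.length : ℕ) ≤ n := by
        simp only [List.length_cons] at hlen; omega
      calc (2 : WithTop ℕ∞) + L.length = ((2 + L.length : ℕ) : WithTop ℕ∞) := by push_cast; ring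
        _ ≤ n := by exact_mod_cast this
    exact pd_comm hU hG j i
  | trans h₁ h₂ IH₁ IH₂ =>
    intro hlen
    refine (IH₁ hlen).trans ?_
    rw [h₁.length_eq] at hlen
    exact IH₂ hlen

/-- canonical list of a multi-index -/
def canonL (d : ℕ) (γ : Fin d → ℕ) : List (Fin d) :=
  (List.finRange d).flatMap fun i => List.replicate (γ i) i

lemma count_flatMap_replicate (γ : Fin d → ℕ) (j : Fin d) (l : List (Fin d)) :
    (l.flatMap fun i => List.replicate (γ i) i).count j
      = ((l.map fun i => if j = i then γ i else 0).sum) := by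
  induction l with
  | nil => simp
  | cons i l IH =>
    simp only [List.flatMap_cons, List.count_append, IH, List.map_cons, List.sum_cons,
      List.count_replicate]
    congr 1
    rcases eq_or_ne j i with h | h
    · simp [h]
    · simp [h, Ne.symm h]

lemma canonL_count (γ : Fin d → ℕ) (j : Fin d) : (canonL d γ).count j = γ j := by
  rw [canonL, count_flatMap_replicate]
  have : ((List.finRange d).map fun i => if j = i then γ i else 0).sum
      = ∑ i : Fin d, if j = i then γ i else 0 := by
    rw [Fin.sum_univ_def]
  rw [this, Finset.sum_ite_eq]
  simp

lemma canonL_length (γ : Fin d → ℕ) : (canonL d γ).length = ∑ i, γ i := by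
  rw [canonL, List.length_flatMap]
  rw [Fin.sum_univ_def]
  congr 1
  simp [Function.comp]

lemma pdList_replicate (i : Fin d) (k : ℕ) (f : EuclideanSpace ℝ (Fin d) → ℝ) :
    pdList d (List.replicate k i) f = (pd d i)^[k] f := by
  induction k with
  | zero => rfl
  | succ k IH => rw [List.replicate_succ, pdList_cons, IH, Function.iterate_succ_apply']

lemma pdMulti_eq_pdList (γ : Fin d → ℕ) (f : EuclideanSpace ℝ (Fin d) → ℝ) :
    pdMulti d γ f = pdList d (canonL d γ) f := by
  rw [pdMulti, canonL]
  induction (List.finRange d) with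
  | nil => rfl
  | cons i l IH =>
    simp only [List.foldr_cons, List.flatMap_cons, pdList_append, IH, pdList_replicate]

lemma pdMulti_zero_index (f : EuclideanSpace ℝ (Fin d) → ℝ) (γ : Fin d → ℕ) (hγ : ∀ i, γ i = 0) :
    pdMulti d γ f = f := by
  rw [pdMulti_eq_pdList]
  have : canonL d γ = [] := by simp [canonL, hγ]
  rw [this]; rfl

end perm

/-- The local Zygmund class `Z^{m,1}(U)` for `U ⊆ ℝ^d`: `C^m` functions on `U` all of whose
partial derivatives `∂^γ f` with `|γ| = m` satisfy a Zygmund estimate on every compact `K ⊆ U`. -/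
def ZygmundClassOn (d m : ℕ) (f : EuclideanSpace ℝ (Fin d) → ℝ)
    (U : Set (EuclideanSpace ℝ (Fin d))) : Prop :=
  ContDiffOn ℝ m f U ∧
    ∀ γ : Fin d → ℕ, (∑ i, γ i) = m →
      ∀ K : Set (EuclideanSpace ℝ (Fin d)), K ⊆ U → IsCompact K →
        ∃ C : ℝ, ∀ x h : EuclideanSpace ℝ (Fin d),
          x ∈ K → x + h ∈ K → x - h ∈ K → h ≠ 0 →
            |pdMulti d γ f (x + h) - 2 * pdMulti d γ f x + pdMulti d γ f (x - h)| ≤ C * ‖h‖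

/-- The local Zygmund class `Z^{m,1}(ℝ)`: `C^m` functions whose `m`-th derivative satisfies a
Zygmund (second difference) estimate on every compact set. -/
def ZygmundClassR (m : ℕ) (f : ℝ → ℝ) : Prop :=
  ContDiff ℝ m f ∧
    ∀ K : Set ℝ, IsCompact K →
      ∃ C : ℝ, ∀ x h : ℝ, x ∈ K → x + h ∈ K → x - h ∈ K → h ≠ 0 →
        |iteratedDeriv m f (x + h) - 2 * iteratedDeriv m f x + iteratedDeriv m f (x - h)|
          ≤ C * |h|

section zygpd

variable {d : ℕ} {U : Set (EuclideanSpace ℝ (Fin d))} {f : EuclideanSpace ℝ (Fin d) → ℝ}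

lemma ZygmundClassOn.pd_mem {m : ℕ} (hU : IsOpen U) (hf : ZygmundClassOn d (m+1) f U)
    (i : Fin d) : ZygmundClassOn d m (pd d i f) U := by
  obtain ⟨hreg, hest⟩ := hf
  constructor
  · refine pd_contDiffOn hU hreg ?_ i
    push_cast
    exact le_rfl
  · intro γ hγ K hKU hK
    set γ' := Function.update γ i (γ i + 1) with hγ'def
    have hsum' : ∑ j, γ' j = m + 1 := by
      rw [hγ'def, Finset.sum_update_of_mem (Finset.mem_univ i)]
      have h2 := Finset.add_sum_erase Finset.univ γ (Finset.mem_univ i)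
      have h3 : Finset.univ \ {i} = Finset.univ.erase i := by
        ext a; simp [Finset.mem_erase, and_comm]
      rw [h3]
      omega
    have hperm : (canonL d γ').Perm (i :: canonL d γ) := by
      rw [List.perm_iff_count]
      intro j
      rw [canonL_count, List.count_cons, canonL_count]
      rcases eq_or_ne j i with h | h
      · subst h; simp [hγ'def]
      · simp [hγ'def, Function.update_of_ne h, Ne.symm h]
    obtain ⟨C, hC⟩ := hest γ' hsum' K hKU hK
    have heq : Set.EqOn (pdMulti d γ (pd d i f)) (pdMulti d γ' f) U := by
      have e1 : pdMulti d γ (pd d i f) = pdList d (canonL d γ ++ [i]) f := by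
        rw [pdMulti_eq_pdList, pdList_append]; rfl
      rw [e1, pdMulti_eq_pdList]
      refine pdList_perm hU hreg ?_ ?_
      · exact (List.perm_append_singleton i (canonL d γ)).trans hperm.symm
      · rw [List.length_append, canonL_length, hγ]; simp
    refine ⟨C, fun x h hx hxh hxh' hne => ?_⟩
    rw [heq (hKU hxh), heq (hKU hx), heq (hKU hxh')]
    exact hC x h hx hxh hxh' hne

end zygpd

section oneD

lemma natCast_le_topCast (n : ℕ) : (n : WithTop ℕ∞) ≤ ((⊤ : ℕ∞) : WithTop ℕ∞) := by
  exact_mod_cast le_top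

lemma lip_on_Icc {φ : ℝ → ℝ} (hφ : Differentiable ℝ φ) {L a b : ℝ}
    (hL : ∀ t ∈ Set.Icc a b, |deriv φ t| ≤ L) {x y : ℝ}
    (hx : x ∈ Set.Icc a b) (hy : y ∈ Set.Icc a b) :
    |φ y - φ x| ≤ L * |y - x| := by
  have := (convex_Icc a b).norm_image_sub_le_of_norm_deriv_le (f := φ) (fun t _ => hφ t)
    (fun t ht => by simpa [Real.norm_eq_abs] using hL t ht) hx hy
  simpa [Real.norm_eq_abs] using this

lemma subset_Icc_of_compact {K : Set ℝ} (hK : IsCompact K) :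
    ∃ R : ℝ, K ⊆ Set.Icc (-R) R := by
  obtain ⟨R, hR⟩ := hK.isBounded.subset_closedBall 0
  exact ⟨R, by rwa [Real.closedBall_eq_Icc, zero_sub, zero_add] at hR⟩

lemma secondDiff_bound_of_contDiff_one {g : ℝ → ℝ} (hg : ContDiff ℝ 1 g)
    (K : Set ℝ) (hK : IsCompact K) :
    ∃ C : ℝ, ∀ x h : ℝ, x ∈ K → x + h ∈ K → x - h ∈ K → h ≠ 0 →
      |g (x + h) - 2 * g x + g (x - h)| ≤ C * |h| := by
  obtain ⟨R, hIcc⟩ := subset_Icc_of_compact hK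
  obtain ⟨L, hL⟩ := isCompact_Icc.exists_bound_of_continuousOn
    (hg.continuous_deriv le_rfl).continuousOn (s := Set.Icc (-R) R)
  have hdiff : Differentiable ℝ g := hg.differentiable one_ne_zero
  have hL' : ∀ t ∈ Set.Icc (-R) R, |deriv g t| ≤ L := by
    intro t ht; simpa [Real.norm_eq_abs] using hL t ht
  refine ⟨2 * L, fun x h hx hxh hxh' _ => ?_⟩
  have e1 : |g (x + h) - g x| ≤ L * |h| := by
    simpa using lip_on_Icc hdiff hL' (hIcc hx) (hIcc hxh)
  have e2 : |g (x - h) - g x| ≤ L * |h| := by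
    have := lip_on_Icc hdiff hL' (hIcc hx) (hIcc hxh')
    simpa using this
  calc |g (x + h) - 2 * g x + g (x - h)|
      = |(g (x + h) - g x) + (g (x - h) - g x)| := by ring_nf
    _ ≤ |g (x + h) - g x| + |g (x - h) - g x| := abs_add_le _ _
    _ ≤ L * |h| + L * |h| := add_le_add e1 e2
    _ = 2 * L * |h| := by ring

lemma contDiff_iteratedDeriv' {k n : ℕ} {g : ℝ → ℝ} (hg : ContDiff ℝ ((n + k : ℕ)) g) :
    ContDiff ℝ n (iteratedDeriv k g) := by
  rw [iteratedDeriv_eq_iterate]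
  exact ContDiff.iterate_deriv' n k hg

lemma ZygmundClassR.succ_to {m : ℕ} {g : ℝ → ℝ} (hg : ZygmundClassR (m + 1) g) :
    ZygmundClassR m g := by
  refine ⟨hg.1.of_le (by exact_mod_cast Nat.le_succ m), fun K hK => ?_⟩
  refine secondDiff_bound_of_contDiff_one ?_ K hK
  refine contDiff_iteratedDeriv' (n := 1) (k := m) ?_
  have h1 : (1 + m : ℕ) = m + 1 := by omega
  rw [h1]
  exact hg.1

lemma ZygmundClassR.deriv_mem {m : ℕ} {g : ℝ → ℝ} (hg : ZygmundClassR (m + 1) g) :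
    ZygmundClassR m (deriv g) := by
  have h1 : ContDiff ℝ ((m : WithTop ℕ∞) + 1) g := by exact_mod_cast hg.1
  refine ⟨(contDiff_succ_iff_deriv.mp h1).2.2, fun K hK => ?_⟩
  obtain ⟨C, hC⟩ := hg.2 K hK
  refine ⟨C, fun x h hx hxh hxh' hne => ?_⟩
  rw [← iteratedDeriv_succ']
  exact hC x h hx hxh hxh' hne

lemma iteratedDeriv_fun_add' {m : ℕ} {f g : ℝ → ℝ} (hf : ContDiff ℝ m f) (hg : ContDiff ℝ m g)
    (x : ℝ) :
    iteratedDeriv m (fun t => f t + g t) x = iteratedDeriv m f x + iteratedDeriv m g x := by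
  have e : (fun t => f t + g t) = f + g := rfl
  rw [e, iteratedDeriv_eq_iteratedFDeriv, iteratedDeriv_eq_iteratedFDeriv,
    iteratedDeriv_eq_iteratedFDeriv, iteratedFDeriv_add_apply (hf.contDiffAt) (hg.contDiffAt)]
  rfl

lemma ZygmundClassR.add {m : ℕ} {f g : ℝ → ℝ} (hf : ZygmundClassR m f) (hg : ZygmundClassR m g) :
    ZygmundClassR m (fun t => f t + g t) := by
  refine ⟨hf.1.add hg.1, fun K hK => ?_⟩
  obtain ⟨C₁, hC₁⟩ := hf.2 K hK
  obtain ⟨C₂, hC₂⟩ := hg.2 K hK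
  refine ⟨C₁ + C₂, fun x h hx hxh hxh' hne => ?_⟩
  rw [iteratedDeriv_fun_add' hf.1 hg.1, iteratedDeriv_fun_add' hf.1 hg.1,
    iteratedDeriv_fun_add' hf.1 hg.1]
  calc |iteratedDeriv m f (x + h) + iteratedDeriv m g (x + h)
        - 2 * (iteratedDeriv m f x + iteratedDeriv m g x)
        + (iteratedDeriv m f (x - h) + iteratedDeriv m g (x - h))|
      = |(iteratedDeriv m f (x + h) - 2 * iteratedDeriv m f x + iteratedDeriv m f (x - h))
        + (iteratedDeriv m g (x + h) - 2 * iteratedDeriv m g x + iteratedDeriv m g (x - h))| := by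
        ring_nf
    _ ≤ _ + _ := abs_add_le _ _
    _ ≤ C₁ * |h| + C₂ * |h| := add_le_add (hC₁ x h hx hxh hxh' hne) (hC₂ x h hx hxh hxh' hne)
    _ = (C₁ + C₂) * |h| := by ring

lemma ZygmundClassR.zero_fun {m : ℕ} : ZygmundClassR m (fun _ : ℝ => (0 : ℝ)) := by
  have hz : iteratedDeriv m (fun _ : ℝ => (0 : ℝ)) = fun _ => 0 := by
    induction m with
    | zero => simp [iteratedDeriv_zero]
    | succ m IH => rw [iteratedDeriv_succ, IH]; simp
  exact ⟨contDiff_const, fun K hK => ⟨0, fun x h hx hxh hxh' hne => by simp [hz]⟩⟩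

end oneD

section mul

lemma ZygmundClassR.mul_smooth :
    ∀ (m : ℕ) (φ g : ℝ → ℝ), ContDiff ℝ (⊤ : ℕ∞) φ → ZygmundClassR m g →
      ZygmundClassR m (fun t => φ t * g t) := by
  intro m
  induction m with
  | zero =>
    intro φ g hφ hg
    refine ⟨(hφ.of_le (natCast_le_topCast 0)).mul hg.1, fun K hK => ?_⟩
    rcases K.eq_empty_or_nonempty with rfl | hKne
    · exact ⟨0, fun x h hx => absurd hx (by simp)⟩
    obtain ⟨R, hIcc⟩ := subset_Icc_of_compact hK
    have hφd : Differentiable ℝ φ := hφ.differentiable (by simp)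
    obtain ⟨Mφ, hMφ⟩ := isCompact_Icc.exists_bound_of_continuousOn
      hφ.continuous.continuousOn (s := Set.Icc (-R) R)
    obtain ⟨Lφ, hLφ⟩ := isCompact_Icc.exists_bound_of_continuousOn
      (hφ.continuous_deriv (by exact_mod_cast le_top)).continuousOn (s := Set.Icc (-R) R)
    obtain ⟨MA, hMA⟩ := hK.exists_bound_of_continuousOn (hg.1.continuous).continuousOn
    obtain ⟨C₀, hC₀⟩ := hg.2 K hK
    have hMφ' : ∀ t ∈ Set.Icc (-R) R, |φ t| ≤ Mφ := by
      intro t ht; simpa [Real.norm_eq_abs] using hMφ t ht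
    have hLφ' : ∀ t ∈ Set.Icc (-R) R, |deriv φ t| ≤ Lφ := by
      intro t ht; simpa [Real.norm_eq_abs] using hLφ t ht
    have hMA' : ∀ t ∈ K, |g t| ≤ MA := by
      intro t ht; simpa [Real.norm_eq_abs, iteratedDeriv_zero] using hMA t ht
    set C₀' := max C₀ 0 with hC₀'def
    have hLφnn : 0 ≤ Lφ := by
      obtain ⟨x₀, hx₀⟩ := hKne
      exact le_trans (abs_nonneg _) (hLφ' x₀ (hIcc hx₀))
    have hMAnn : 0 ≤ MA := by
      obtain ⟨x₀, hx₀⟩ := hKne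
      exact le_trans (abs_nonneg _) (hMA' x₀ hx₀)
    have hMφnn : 0 ≤ Mφ := by
      obtain ⟨x₀, hx₀⟩ := hKne
      exact le_trans (abs_nonneg _) (hMφ' x₀ (hIcc hx₀))
    refine ⟨Mφ * C₀' + Lφ * (2 * MA) + 2 * Lφ * MA, fun x h hx hxh hxh' hne => ?_⟩
    simp only [iteratedDeriv_zero] at *
    have hZ : |g (x + h) - 2 * g x + g (x - h)| ≤ C₀' * |h| := by
      refine le_trans ?_ (mul_le_mul_of_nonneg_right (le_max_left C₀ 0) (abs_nonneg h))
      simpa [iteratedDeriv_zero] using hC₀ x h hx hxh hxh' hne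
    have h1 : |φ (x + h) - φ x| ≤ Lφ * |h| := by
      simpa using lip_on_Icc hφd hLφ' (hIcc hx) (hIcc hxh)
    have h2 : |φ (x - h) - φ x| ≤ Lφ * |h| := by
      simpa using lip_on_Icc hφd hLφ' (hIcc hx) (hIcc hxh')
    have h3 : |g (x + h) - g (x - h)| ≤ 2 * MA := by
      calc |g (x + h) - g (x - h)| ≤ |g (x + h)| + |g (x - h)| := abs_sub _ _
        _ ≤ MA + MA := add_le_add (hMA' _ hxh) (hMA' _ hxh')
        _ = 2 * MA := by ring
    have h4 : |g (x - h)| ≤ MA := hMA' _ hxh'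
    have h5 : |φ x| ≤ Mφ := hMφ' _ (hIcc hx)
    have key : φ (x + h) * g (x + h) - 2 * (φ x * g x) + φ (x - h) * g (x - h)
        = φ x * (g (x + h) - 2 * g x + g (x - h))
          + (φ (x + h) - φ x) * (g (x + h) - g (x - h))
          + ((φ (x + h) - φ x) + (φ (x - h) - φ x)) * g (x - h) := by ring
    rw [key]
    calc |φ x * (g (x + h) - 2 * g x + g (x - h))
          + (φ (x + h) - φ x) * (g (x + h) - g (x - h))
          + ((φ (x + h) - φ x) + (φ (x - h) - φ x)) * g (x - h)|
        ≤ |φ x * (g (x + h) - 2 * g x + g (x - h))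
            + (φ (x + h) - φ x) * (g (x + h) - g (x - h))|
          + |((φ (x + h) - φ x) + (φ (x - h) - φ x)) * g (x - h)| := abs_add_le _ _
      _ ≤ |φ x * (g (x + h) - 2 * g x + g (x - h))|
          + |(φ (x + h) - φ x) * (g (x + h) - g (x - h))|
          + |((φ (x + h) - φ x) + (φ (x - h) - φ x)) * g (x - h)| := by
            exact add_le_add_left (abs_add_le _ _) _
      _ ≤ Mφ * (C₀' * |h|) + (Lφ * |h|) * (2 * MA) + (Lφ * |h| + Lφ * |h|) * MA := by
            gcongr
            · rw [abs_mul]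
              exact mul_le_mul h5 hZ (abs_nonneg _) hMφnn
            · rw [abs_mul]
              exact mul_le_mul h1 h3 (abs_nonneg _) (by positivity)
            · rw [abs_mul]
              refine mul_le_mul (le_trans (abs_add_le _ _) (add_le_add h1 h2)) h4 (abs_nonneg _)
                (by positivity)
      _ = (Mφ * C₀' + Lφ * (2 * MA) + 2 * Lφ * MA) * |h| := by ring
  | succ m IH =>
    intro φ g hφ hg
    have hgd : Differentiable ℝ g :=
      hg.1.differentiable (by simp)
    have hφd : Differentiable ℝ φ := hφ.differentiable (by simp)
    have hder : deriv (fun t => φ t * g t) = fun t => deriv φ t * g t + φ t * deriv g t := by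
      funext t
      exact deriv_mul (hφd t) (hgd t)
    have hφ' : ContDiff ℝ (⊤ : ℕ∞) (deriv φ) := (contDiff_infty_iff_deriv.mp hφ).2
    have hsum : ZygmundClassR m (fun t => deriv φ t * g t + φ t * deriv g t) :=
      ZygmundClassR.add (IH (deriv φ) g hφ' hg.succ_to) (IH φ (deriv g) hφ hg.deriv_mem)
    refine ⟨(hφ.of_le (natCast_le_topCast (m + 1))).mul hg.1, fun K hK => ?_⟩
    obtain ⟨C, hC⟩ := hsum.2 K hK
    refine ⟨C, fun x h hx hxh hxh' hne => ?_⟩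
    have e : iteratedDeriv (m + 1) (fun t => φ t * g t)
        = iteratedDeriv m (fun t => deriv φ t * g t + φ t * deriv g t) := by
      rw [iteratedDeriv_succ', hder]
    rw [e]
    exact hC x h hx hxh hxh' hne

lemma ZygmundClassR.sum {m : ℕ} {ι : Type*} (s : Finset ι) (G : ι → ℝ → ℝ)
    (hG : ∀ i ∈ s, ZygmundClassR m (G i)) :
    ZygmundClassR m (fun t => ∑ i ∈ s, G i t) := by
  classical
  induction s using Finset.induction_on with
  | empty => simpa using (ZygmundClassR.zero_fun (m := m))
  | insert a s' hnotmem IH =>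
    have e : (fun t => ∑ i ∈ insert a s', G i t)
        = fun t => G a t + ∑ i ∈ s', G i t := by
      funext t; rw [Finset.sum_insert hnotmem]
    rw [e]
    exact (hG a (Finset.mem_insert_self a s')).add
      (IH fun i hi => hG i (Finset.mem_insert_of_mem hi))

end mul

section dyadic

lemma nat_le_two_mul_two_pow_half : ∀ n : ℕ, n ≤ 2 * 2 ^ (n / 2) := by
  intro n
  induction n using Nat.strong_induction_on with
  | _ n IH =>
    match n with
    | 0 => simp
    | 1 => simp
    | (n + 2) =>
      have h1 : n ≤ 2 * 2 ^ (n / 2) := IH n (by omega)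
      have h2 : (n + 2) / 2 = n / 2 + 1 := Nat.add_div_right n (by norm_num)
      have h3 : 1 ≤ 2 ^ (n / 2) := Nat.one_le_two_pow
      rw [h2, pow_succ]
      omega

lemma zygmund_dyadic {E : Type*} [NormedAddCommGroup E] [NormedSpace ℝ E]
    (f : E → ℝ) (K' : Set E) (C₀ Mf δ : ℝ) (hδ : 0 < δ) (hC₀ : 0 ≤ C₀) (hMf : 0 ≤ Mf)
    (hZ : ∀ x h : E, x ∈ K' → x + h ∈ K' → x - h ∈ K' → h ≠ 0 →
      |f (x + h) - 2 * f x + f (x - h)| ≤ C₀ * ‖h‖)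
    (hM : ∀ x ∈ K', |f x| ≤ Mf)
    (P Q : E) (hPK : ∀ y : E, ‖y - P‖ ≤ δ → y ∈ K') (hQ : ‖Q - P‖ ≤ δ) :
    |f Q - f P| ≤ 4 * Mf / δ * ‖Q - P‖ + C₀ * Real.sqrt (δ * ‖Q - P‖) := by
  classical
  rcases eq_or_ne Q P with rfl | hQP
  · simp only [sub_self, abs_zero]
    positivity
  set u := Q - P with hu
  have hune : u ≠ 0 := fun h0 => hQP (by rwa [hu, sub_eq_zero] at h0)
  set ρ := ‖u‖ with hρdef
  have hρpos : 0 < ρ := norm_pos_iff.mpr hune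
  set N := ⌈δ / ρ⌉₊ with hN
  have hP0 : 2 ^ 0 * ρ ≤ δ := by simpa using hQ
  set n := Nat.findGreatest (fun k : ℕ => 2 ^ k * ρ ≤ δ) N with hn
  have hPn : 2 ^ n * ρ ≤ δ := by
    have := Nat.findGreatest_spec (P := fun k : ℕ => 2 ^ k * ρ ≤ δ) (Nat.zero_le N) hP0
    simpa [hn] using this
  have h2n : (2:ℝ) ^ n ≤ δ / ρ := by rw [le_div_iff₀ hρpos]; exact hPn
  have hnN : n < N := by
    have h2 : (n:ℝ) < 2 ^ n := by exact_mod_cast Nat.lt_two_pow_self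
    have h3 : δ / ρ ≤ (N:ℝ) := Nat.le_ceil (δ / ρ)
    exact_mod_cast h2.trans_le (h2n.trans h3)
  have hδlt : δ < 2 ^ (n + 1) * ρ := by
    have := Nat.findGreatest_is_greatest (Nat.lt_succ_of_le le_rfl : n < n + 1) hnN
    simpa [hn] using not_le.mp this
  -- the dyadic induction
  have claim : ∀ k : ℕ, k ≤ n →
      |f (P + u) - f P| ≤ (1 / 2 ^ k) * |f (P + (2 ^ k : ℝ) • u) - f P| + k * (C₀ * ρ / 2) := by
    intro k
    induction k with
    | zero => simp
    | succ k IH =>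
      intro hk1
      have hk : k ≤ n := le_trans (Nat.le_succ k) hk1
      have hstep : |f (P + (2 ^ k : ℝ) • u) - f P|
          ≤ (1 / 2) * |f (P + (2 ^ (k + 1) : ℝ) • u) - f P| + C₀ * (2 ^ k * ρ) / 2 := by
        set x := P + (2 ^ k : ℝ) • u with hx
        set hh := (2 ^ k : ℝ) • u with hhdef
        have hxh : x + hh = P + (2 ^ (k + 1) : ℝ) • u := by
          rw [hx, hhdef, add_assoc, ← add_smul]
          norm_num
          module
        have hxmh : x - hh = P := by rw [hx, hhdef]; abel
        have hmem : ∀ j : ℕ, j ≤ n → P + (2 ^ j : ℝ) • u ∈ K' := by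
          intro j hj
          apply hPK
          have : ‖P + (2 ^ j : ℝ) • u - P‖ = 2 ^ j * ρ := by
            rw [add_sub_cancel_left, norm_smul]
            simp [abs_of_pos, hρdef]
          rw [this]
          calc (2:ℝ) ^ j * ρ ≤ 2 ^ n * ρ := by
                have : (2:ℝ) ^ j ≤ 2 ^ n := pow_le_pow_right₀ (by norm_num) hj
                exact mul_le_mul_of_nonneg_right this hρpos.le
            _ ≤ δ := hPn
        have hxK : x ∈ K' := hmem k hk
        have hxhK : x + hh ∈ K' := by rw [hxh]; exact hmem (k + 1) hk1
        have hxmhK : x - hh ∈ K' := by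
          rw [hxmh]; exact hPK P (by simpa using hδ.le)
        have hhne : hh ≠ 0 := smul_ne_zero (by positivity) hune
        have hZx := hZ x hh hxK hxhK hxmhK hhne
        have hnorm : ‖hh‖ = 2 ^ k * ρ := by
          rw [hhdef, norm_smul]; simp [abs_of_pos, hρdef]
        rw [hnorm] at hZx
        rw [hxmh] at hZx
        set A := f (x + hh) with hA
        set B := f x with hB
        set D := f P with hD
        have halg : 2 * (B - D) = (A - D) - (A - 2 * B + D) := by ring
        have h1 : |2 * (B - D)| ≤ |A - D| + C₀ * (2 ^ k * ρ) := by
          rw [halg]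
          exact (abs_sub _ _).trans (add_le_add_right hZx _)
        rw [abs_mul, abs_two] at h1
        rw [hxh] at hA
        rw [← hA]
        linarith [abs_nonneg (A - D)]

      calc |f (P + u) - f P|
          ≤ (1 / 2 ^ k) * |f (P + (2 ^ k : ℝ) • u) - f P| + k * (C₀ * ρ / 2) := IH hk
        _ ≤ (1 / 2 ^ k) * ((1 / 2) * |f (P + (2 ^ (k + 1) : ℝ) • u) - f P|
              + C₀ * (2 ^ k * ρ) / 2) + k * (C₀ * ρ / 2) := by
            refine add_le_add_left (mul_le_mul_of_nonneg_left hstep (by positivity)) _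
        _ = (1 / 2 ^ (k + 1)) * |f (P + (2 ^ (k + 1) : ℝ) • u) - f P|
              + (k + 1 : ℕ) * (C₀ * ρ / 2) := by
            push_cast
            field_simp
            ring
  have hend := claim n le_rfl
  have hPu : P + u = Q := by rw [hu]; abel
  rw [hPu] at hend
  have hbound : |f (P + (2 ^ n : ℝ) • u) - f P| ≤ 2 * Mf := by
    have h1 : P + (2 ^ n : ℝ) • u ∈ K' := by
      apply hPK
      have : ‖P + (2 ^ n : ℝ) • u - P‖ = 2 ^ n * ρ := by
        rw [add_sub_cancel_left, norm_smul]; simp [abs_of_pos, hρdef]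
      rw [this]; exact hPn
    have h2 : P ∈ K' := hPK P (by simpa using hδ.le)
    calc |f (P + (2 ^ n : ℝ) • u) - f P| ≤ |f (P + (2 ^ n : ℝ) • u)| + |f P| := abs_sub _ _
      _ ≤ Mf + Mf := add_le_add (hM _ h1) (hM _ h2)
      _ = 2 * Mf := by ring
  have hfinal1 : (1 / 2 ^ n : ℝ) * |f (P + (2 ^ n : ℝ) • u) - f P| ≤ 4 * Mf / δ * ρ := by
    have h1 : (1 / 2 ^ n : ℝ) ≤ 2 * ρ / δ := by
      rw [div_le_div_iff₀ (by positivity) hδ]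
      calc (1:ℝ) * δ = δ := one_mul δ
        _ ≤ 2 ^ (n + 1) * ρ := hδlt.le
        _ = 2 * ρ * 2 ^ n := by ring
    calc (1 / 2 ^ n : ℝ) * |f (P + (2 ^ n : ℝ) • u) - f P|
        ≤ (2 * ρ / δ) * (2 * Mf) :=
          mul_le_mul h1 hbound (abs_nonneg _) (by positivity)
      _ = 4 * Mf / δ * ρ := by ring
  have hfinal2 : (n : ℝ) * (C₀ * ρ / 2) ≤ C₀ * Real.sqrt (δ * ρ) := by
    have h1 : (n : ℝ) ≤ 2 * Real.sqrt (2 ^ n) := by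
      have h2 : (n : ℝ) ≤ 2 * 2 ^ (n / 2) := by exact_mod_cast nat_le_two_mul_two_pow_half n
      have h3 : ((2 : ℝ) ^ (n / 2 : ℕ)) ≤ Real.sqrt (2 ^ n) := by
        have h3a : ((2:ℝ) ^ (n / 2 : ℕ)) ^ 2 ≤ 2 ^ n := by
          rw [← pow_mul]
          exact pow_le_pow_right₀ (by norm_num) (by omega)
        calc ((2:ℝ) ^ (n / 2 : ℕ)) = Real.sqrt (((2:ℝ) ^ (n / 2 : ℕ)) ^ 2) :=
              (Real.sqrt_sq (by positivity)).symm
          _ ≤ Real.sqrt (2 ^ n) := Real.sqrt_le_sqrt h3a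
      linarith
    have h4 : Real.sqrt (2 ^ n) ≤ Real.sqrt (δ / ρ) := Real.sqrt_le_sqrt h2n
    have h5 : (n : ℝ) ≤ 2 * Real.sqrt (δ / ρ) := by linarith
    have h6 : ρ * Real.sqrt (δ / ρ) = Real.sqrt (δ * ρ) := by
      rw [show ρ * Real.sqrt (δ / ρ) = Real.sqrt (ρ ^ 2) * Real.sqrt (δ / ρ) by
        rw [Real.sqrt_sq hρpos.le]]
      rw [← Real.sqrt_mul (by positivity)]
      congr 1
      field_simp
    calc (n : ℝ) * (C₀ * ρ / 2) ≤ (2 * Real.sqrt (δ / ρ)) * (C₀ * ρ / 2) := by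
          refine mul_le_mul_of_nonneg_right h5 (by positivity)
      _ = C₀ * (ρ * Real.sqrt (δ / ρ)) := by ring
      _ = C₀ * Real.sqrt (δ * ρ) := by rw [h6]
  calc |f Q - f P| ≤ (1 / 2 ^ n) * |f (P + (2 ^ n : ℝ) • u) - f P| + n * (C₀ * ρ / 2) := hend
    _ ≤ 4 * Mf / δ * ρ + C₀ * Real.sqrt (δ * ρ) := add_le_add hfinal1 hfinal2
end dyadic

section base

open Metric Set

lemma zyg_comp_base (d : ℕ) (U : Set (EuclideanSpace ℝ (Fin d))) (hU : IsOpen U)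
    (c : ℝ → EuclideanSpace ℝ (Fin d)) (hc : ContDiff ℝ (⊤ : ℕ∞) c) (hcU : ∀ t, c t ∈ U)
    (f : EuclideanSpace ℝ (Fin d) → ℝ) (hfc : ContinuousOn f U)
    (hZ : ∀ K : Set (EuclideanSpace ℝ (Fin d)), K ⊆ U → IsCompact K →
      ∃ C : ℝ, ∀ x h, x ∈ K → x + h ∈ K → x - h ∈ K → h ≠ 0 →
        |f (x + h) - 2 * f x + f (x - h)| ≤ C * ‖h‖) :
    ∀ K : Set ℝ, IsCompact K → ∃ C : ℝ, ∀ x h : ℝ, x ∈ K → x + h ∈ K → x - h ∈ K → h ≠ 0 →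
      |f (c (x + h)) - 2 * f (c x) + f (c (x - h))| ≤ C * |h| := by
  intro K hK
  rcases K.eq_empty_or_nonempty with rfl | hKne
  · exact ⟨0, fun x h hx => absurd hx (by simp)⟩
  obtain ⟨R, hIcc⟩ := subset_Icc_of_compact hK
  set I := Set.Icc (-R) R with hI
  have hIco : IsCompact I := isCompact_Icc
  have hIconv : Convex ℝ I := convex_Icc _ _
  set S := c '' I with hS
  have hSco : IsCompact S := hIco.image hc.continuous
  have hSU : S ⊆ U := by rintro _ ⟨t, _, rfl⟩; exact hcU t
  obtain ⟨δ, hδpos, hδsub⟩ := hSco.exists_cthickening_subset_open hU hSU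
  set K' := cthickening δ S with hK'
  have hK'co : IsCompact K' := hSco.cthickening
  have hSK' : S ⊆ K' := self_subset_cthickening S
  have hmemK' : ∀ P : EuclideanSpace ℝ (Fin d), P ∈ S →
      ∀ y : EuclideanSpace ℝ (Fin d), ‖y - P‖ ≤ δ → y ∈ K' := by
    intro P hP y hy
    exact mem_cthickening_of_dist_le y P δ S hP (by rwa [dist_eq_norm])
  obtain ⟨C₀0, hC₀0⟩ := hZ K' hδsub hK'co
  set C₀ := max C₀0 0 with hC₀def
  have hC₀nn : 0 ≤ C₀ := le_max_right _ _
  have hC₀ : ∀ x h, x ∈ K' → x + h ∈ K' → x - h ∈ K' → h ≠ 0 →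
      |f (x + h) - 2 * f x + f (x - h)| ≤ C₀ * ‖h‖ := by
    intro x h h1 h2 h3 h4
    exact (hC₀0 x h h1 h2 h3 h4).trans
      (mul_le_mul_of_nonneg_right (le_max_left _ _) (norm_nonneg _))
  obtain ⟨Mf0, hMf0⟩ := hK'co.exists_bound_of_continuousOn (hfc.mono hδsub)
  set Mf := max Mf0 0 with hMfdef
  have hMfnn : 0 ≤ Mf := le_max_right _ _
  have hMf : ∀ x ∈ K', |f x| ≤ Mf := by
    intro x hx
    exact le_trans (by simpa [Real.norm_eq_abs] using hMf0 x hx) (le_max_left _ _)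
  -- bounds on the curve
  have hcdiff : Differentiable ℝ c := hc.differentiable (by simp)
  have hc' : ContDiff ℝ (⊤ : ℕ∞) (deriv c) := (contDiff_infty_iff_deriv.mp hc).2
  have hc'diff : Differentiable ℝ (deriv c) := hc'.differentiable (by simp)
  obtain ⟨M₁0, hM₁0⟩ := hIco.exists_bound_of_continuousOn (hc'.continuous).continuousOn
  set B1 := max M₁0 0 with hB1def
  have hB1nn : 0 ≤ B1 := le_max_right _ _
  have hB1 : ∀ t ∈ I, ‖deriv c t‖ ≤ B1 := fun t ht => (hM₁0 t ht).trans (le_max_left _ _)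
  obtain ⟨L0, hL0⟩ := hIco.exists_bound_of_continuousOn
    ((hc'.continuous_deriv (by exact_mod_cast le_top))).continuousOn
  set L := max L0 0 with hLdef
  have hLnn : 0 ≤ L := le_max_right _ _
  have hL : ∀ t ∈ I, ‖deriv (deriv c) t‖ ≤ L := fun t ht => (hL0 t ht).trans (le_max_left _ _)
  -- Lipschitz bound for deriv c on I
  have hlip : ∀ s ∈ I, ∀ t ∈ I, ‖deriv c s - deriv c t‖ ≤ L * |s - t| := by
    intro s hs t ht
    have := hIconv.norm_image_sub_le_of_norm_deriv_le (f := deriv c)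
      (fun y _ => hc'diff y) hL ht hs
    simpa [Real.norm_eq_abs] using this
  -- Taylor estimate
  have htaylor : ∀ t h : ℝ, t ∈ I → t + h ∈ I →
      ‖c (t + h) - c t - h • deriv c t‖ ≤ L * h ^ 2 := by
    intro t h ht hth
    set w := fun s : ℝ => c s - s • deriv c t with hw
    have hwd : ∀ s : ℝ, HasDerivAt w (deriv c s - deriv c t) s := by
      intro s
      have h2 : HasDerivAt (fun y : ℝ => y • deriv c t) ((1:ℝ) • deriv c t) s :=
        (hasDerivAt_id s).smul_const (deriv c t)
      rw [one_smul] at h2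
      exact ((hcdiff s).hasDerivAt).sub h2
    have hJsub : Set.uIcc t (t + h) ⊆ I := Set.ordConnected_Icc.uIcc_subset ht hth
    have hbound : ∀ s ∈ Set.uIcc t (t + h), ‖deriv c s - deriv c t‖ ≤ L * |h| := by
      intro s hs
      have h1 : |s - t| ≤ |h| := by
        rcases Set.mem_uIcc.mp hs with ⟨h1, h2⟩ | ⟨h1, h2⟩ <;>
          rw [abs_le] <;> constructor <;> linarith [le_abs_self h, neg_abs_le h]
      exact (hlip s (hJsub hs) t ht).trans (mul_le_mul_of_nonneg_left h1 hLnn)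
    have hres := (convex_uIcc t (t + h)).norm_image_sub_le_of_norm_hasDerivWithin_le
      (f := w) (f' := fun s => deriv c s - deriv c t)
      (fun s hs => (hwd s).hasDerivWithinAt) hbound
      (Set.left_mem_uIcc) (Set.right_mem_uIcc)
    have he : w (t + h) - w t = c (t + h) - c t - h • deriv c t := by
      rw [hw]
      simp only [add_smul]
      abel
    rw [he] at hres
    calc ‖c (t + h) - c t - h • deriv c t‖ ≤ L * |h| * ‖t + h - t‖ := hres
      _ = L * h ^ 2 := by
        rw [show t + h - t = h by ring, Real.norm_eq_abs, ← sq_abs h]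
        ring
  -- the small scale
  set h₀ := min 1 (min (δ / (B1 + 1)) (Real.sqrt (δ / (L + 1)))) with hh₀def
  have hh₀pos : 0 < h₀ := by
    refine lt_min one_pos (lt_min (by positivity) (Real.sqrt_pos.mpr (by positivity)))
  set Ccorr := 4 * Mf * L / δ + C₀ * Real.sqrt (δ * L) with hCcorr
  have hCcorrnn : 0 ≤ Ccorr := by positivity
  set Cs := C₀ * B1 + 2 * Ccorr with hCs
  refine ⟨max Cs (4 * Mf / h₀), fun x h hx hxh hxh' hne => ?_⟩
  have hxI : x ∈ I := hIcc hx
  have hxhI : x + h ∈ I := hIcc hxh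
  have hxh'I : x - h ∈ I := hIcc hxh'
  rcases le_or_gt |h| h₀ with hsmall | hlarge
  · -- small h
    have hh1 : |h| ≤ 1 := hsmall.trans (min_le_left _ _)
    have hhB : |h| ≤ δ / (B1 + 1) := hsmall.trans ((min_le_right _ _).trans (min_le_left _ _))
    have hhL : |h| ≤ Real.sqrt (δ / (L + 1)) :=
      hsmall.trans ((min_le_right _ _).trans (min_le_right _ _))
    have hsq : h ^ 2 ≤ δ / (L + 1) := by
      have := Real.sqrt_le_sqrt (le_refl (δ / (L + 1)))
      calc h ^ 2 = |h| ^ 2 := (sq_abs h).symm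
        _ ≤ Real.sqrt (δ / (L + 1)) ^ 2 := by
            exact pow_le_pow_left₀ (abs_nonneg h) hhL 2
        _ = δ / (L + 1) := Real.sq_sqrt (by positivity)
    have hLh2δ : L * h ^ 2 ≤ δ := by
      calc L * h ^ 2 ≤ L * (δ / (L + 1)) := mul_le_mul_of_nonneg_left hsq hLnn
        _ ≤ δ := by
          rw [mul_div_assoc']
          rw [div_le_iff₀ (by positivity)]
          nlinarith [hδpos]
    set v := h • deriv c x with hv
    have hvnorm : ‖v‖ ≤ B1 * |h| := by
      rw [hv, norm_smul, Real.norm_eq_abs]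
      calc |h| * ‖deriv c x‖ ≤ |h| * B1 := mul_le_mul_of_nonneg_left (hB1 x hxI) (abs_nonneg h)
        _ = B1 * |h| := mul_comm _ _
    have hvδ : ‖v‖ ≤ δ := by
      calc ‖v‖ ≤ B1 * |h| := hvnorm
        _ ≤ B1 * (δ / (B1 + 1)) := mul_le_mul_of_nonneg_left hhB hB1nn
        _ ≤ δ := by
          rw [mul_div_assoc']
          rw [div_le_iff₀ (by positivity)]
          nlinarith [hδpos]
    have hcxS : c x ∈ S := ⟨x, hxI, rfl⟩
    have hcxpS : c (x + h) ∈ S := ⟨x + h, hxhI, rfl⟩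
    have hcxmS : c (x - h) ∈ S := ⟨x - h, hxh'I, rfl⟩
    -- third term
    have hT3 : |f (c x + v) - 2 * f (c x) + f (c x - v)| ≤ C₀ * B1 * |h| := by
      rcases eq_or_ne v 0 with hv0 | hvne
      · rw [hv0]
        simp only [add_zero, sub_zero]
        have : f (c x) - 2 * f (c x) + f (c x) = 0 := by ring
        rw [this, abs_zero]
        positivity
      · have hm1 : c x ∈ K' := hSK' hcxS
        have hm2 : c x + v ∈ K' := hmemK' _ hcxS _ (by simpa using hvδ)
        have hm3 : c x - v ∈ K' := hmemK' _ hcxS _ (by simpa using hvδ)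
        calc |f (c x + v) - 2 * f (c x) + f (c x - v)| ≤ C₀ * ‖v‖ := hC₀ _ _ hm1 hm2 hm3 hvne
          _ ≤ C₀ * (B1 * |h|) := mul_le_mul_of_nonneg_left hvnorm hC₀nn
          _ = C₀ * B1 * |h| := by ring
    -- corrections
    have hcorr : ∀ s : ℝ, s ∈ I → ‖c x + s • deriv c x - c (x + s)‖ ≤ L * s ^ 2 →
        |f (c (x + s)) - f (c x + s • deriv c x)| ≤ Ccorr * |h| → True := fun _ _ _ _ => trivial
    have hkey : ∀ s : ℝ, x + s ∈ I → s ^ 2 ≤ h ^ 2 →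
        |f (c x + s • deriv c x) - f (c (x + s))| ≤ Ccorr * |h| := by
      intro s hsI hs2
      have hρ : ‖(c x + s • deriv c x) - c (x + s)‖ ≤ L * h ^ 2 := by
        have := htaylor x s hxI hsI
        have he : c x + s • deriv c x - c (x + s) = -(c (x + s) - c x - s • deriv c x) := by abel
        rw [he, norm_neg]
        exact this.trans (mul_le_mul_of_nonneg_left hs2 hLnn)
      have hρδ : ‖(c x + s • deriv c x) - c (x + s)‖ ≤ δ := hρ.trans hLh2δ
      have hdy := zygmund_dyadic f K' C₀ Mf δ hδpos hC₀nn hMfnn hC₀ hMf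
        (c (x + s)) (c x + s • deriv c x)
        (hmemK' _ ⟨x + s, hsI, rfl⟩) hρδ
      refine hdy.trans ?_
      have hterm1 : 4 * Mf / δ * ‖(c x + s • deriv c x) - c (x + s)‖ ≤ 4 * Mf * L / δ * |h| := by
        calc 4 * Mf / δ * ‖(c x + s • deriv c x) - c (x + s)‖
            ≤ 4 * Mf / δ * (L * h ^ 2) := mul_le_mul_of_nonneg_left hρ (by positivity)
          _ ≤ 4 * Mf / δ * (L * |h|) := by
              have : h ^ 2 ≤ |h| := by
                calc h ^ 2 = |h| * |h| := by rw [← sq_abs]; ring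
                  _ ≤ 1 * |h| := mul_le_mul_of_nonneg_right hh1 (abs_nonneg h)
                  _ = |h| := one_mul _
              exact mul_le_mul_of_nonneg_left (mul_le_mul_of_nonneg_left this hLnn) (by positivity)
          _ = 4 * Mf * L / δ * |h| := by ring
      have hterm2 : C₀ * Real.sqrt (δ * ‖(c x + s • deriv c x) - c (x + s)‖)
          ≤ C₀ * Real.sqrt (δ * L) * |h| := by
        have h1 : Real.sqrt (δ * ‖(c x + s • deriv c x) - c (x + s)‖)
            ≤ Real.sqrt (δ * L * h ^ 2) := by
          refine Real.sqrt_le_sqrt ?_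
          calc δ * ‖(c x + s • deriv c x) - c (x + s)‖ ≤ δ * (L * h ^ 2) :=
              mul_le_mul_of_nonneg_left hρ hδpos.le
            _ = δ * L * h ^ 2 := by ring
        have h2 : Real.sqrt (δ * L * h ^ 2) = Real.sqrt (δ * L) * |h| := by
          rw [Real.sqrt_mul (by positivity), Real.sqrt_sq_eq_abs]
        calc C₀ * Real.sqrt (δ * ‖(c x + s • deriv c x) - c (x + s)‖)
            ≤ C₀ * (Real.sqrt (δ * L) * |h|) := by
              rw [← h2]; exact mul_le_mul_of_nonneg_left h1 hC₀nn
          _ = C₀ * Real.sqrt (δ * L) * |h| := by ring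
      calc 4 * Mf / δ * ‖c x + s • deriv c x - c (x + s)‖
            + C₀ * Real.sqrt (δ * ‖c x + s • deriv c x - c (x + s)‖)
          ≤ 4 * Mf * L / δ * |h| + C₀ * Real.sqrt (δ * L) * |h| := add_le_add hterm1 hterm2
        _ = Ccorr * |h| := by rw [hCcorr]; ring
    have hplus : |f (c x + v) - f (c (x + h))| ≤ Ccorr * |h| := by
      have := hkey h hxhI (le_refl _)
      simpa [hv] using this
    have hminus : |f (c x - v) - f (c (x - h))| ≤ Ccorr * |h| := by
      have := hkey (-h) (by simpa [sub_eq_add_neg] using hxh'I) (by rw [neg_pow]; simp)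
      have he : c x + (-h) • deriv c x = c x - v := by
        rw [hv, neg_smul]; abel
      rw [he] at this
      have he2 : x + -h = x - h := by ring
      rw [he2] at this
      exact this
    have hdecomp : f (c (x + h)) - 2 * f (c x) + f (c (x - h))
        = -(f (c x + v) - f (c (x + h))) - (f (c x - v) - f (c (x - h)))
          + (f (c x + v) - 2 * f (c x) + f (c x - v)) := by ring
    calc |f (c (x + h)) - 2 * f (c x) + f (c (x - h))|
        = |-(f (c x + v) - f (c (x + h))) - (f (c x - v) - f (c (x - h)))
            + (f (c x + v) - 2 * f (c x) + f (c x - v))| := by rw [hdecomp]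
      _ ≤ |-(f (c x + v) - f (c (x + h))) - (f (c x - v) - f (c (x - h)))|
          + |f (c x + v) - 2 * f (c x) + f (c x - v)| := abs_add_le _ _
      _ ≤ (|f (c x + v) - f (c (x + h))| + |f (c x - v) - f (c (x - h))|)
          + |f (c x + v) - 2 * f (c x) + f (c x - v)| := by
            refine add_le_add_left ?_ _
            calc |-(f (c x + v) - f (c (x + h))) - (f (c x - v) - f (c (x - h)))|
                ≤ |-(f (c x + v) - f (c (x + h)))| + |f (c x - v) - f (c (x - h))| := abs_sub _ _
              _ = _ := by rw [abs_neg]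
      _ ≤ (Ccorr * |h| + Ccorr * |h|) + C₀ * B1 * |h| :=
            add_le_add (add_le_add hplus hminus) hT3
      _ = Cs * |h| := by rw [hCs]; ring
      _ ≤ max Cs (4 * Mf / h₀) * |h| :=
            mul_le_mul_of_nonneg_right (le_max_left _ _) (abs_nonneg h)
  · -- large h
    have hb : ∀ t ∈ I, |f (c t)| ≤ Mf := fun t ht => hMf _ (hSK' ⟨t, ht, rfl⟩)
    calc |f (c (x + h)) - 2 * f (c x) + f (c (x - h))|
        ≤ |f (c (x + h)) - 2 * f (c x)| + |f (c (x - h))| := abs_add_le _ _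
      _ ≤ (|f (c (x + h))| + |2 * f (c x)|) + |f (c (x - h))| :=
            add_le_add_left (abs_sub _ _) _
      _ ≤ (Mf + 2 * Mf) + Mf := by
            refine add_le_add (add_le_add (hb _ hxhI) ?_) (hb _ hxh'I)
            rw [abs_mul, abs_two]
            exact mul_le_mul_of_nonneg_left (hb _ hxI) (by norm_num)
      _ = (4 * Mf / h₀) * h₀ := by field_simp; ring
      _ ≤ (4 * Mf / h₀) * |h| := mul_le_mul_of_nonneg_left hlarge.le
            (div_nonneg (mul_nonneg (by norm_num) hMfnn) hh₀pos.le)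
      _ ≤ max Cs (4 * Mf / h₀) * |h| :=
            mul_le_mul_of_nonneg_right (le_max_right _ _) (abs_nonneg h)

end base

/-- **Proposition 3.1 (1).** Composition with a smooth curve preserves the Zygmund class:
if `f ∈ Z^{m,1}(U)` and `c : ℝ → U` is smooth, then `f ∘ c ∈ Z^{m,1}(ℝ)`. -/
theorem zygmund_comp_smooth_curve (d m : ℕ)
    (U : Set (EuclideanSpace ℝ (Fin d))) (hU : IsOpen U)
    (c : ℝ → EuclideanSpace ℝ (Fin d)) (hc : ContDiff ℝ (⊤ : ℕ∞) c) (hcU : ∀ t, c t ∈ U)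
    (f : EuclideanSpace ℝ (Fin d) → ℝ) (hf : ZygmundClassOn d m f U) :
    ZygmundClassR m (f ∘ c) := by
  induction m generalizing f with
  | zero =>
    obtain ⟨hreg, hest⟩ := hf
    have hcont : ContinuousOn f U := by
      have : ContDiffOn ℝ 0 f U := by exact_mod_cast hreg
      exact this.continuousOn
    constructor
    · have h0 : ContDiff ℝ 0 (f ∘ c) := by
        rw [contDiff_zero]
        exact hcont.comp_continuous hc.continuous hcU
      exact_mod_cast h0
    · intro K hK
      have hZ : ∀ K' : Set (EuclideanSpace ℝ (Fin d)), K' ⊆ U → IsCompact K' →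
          ∃ C : ℝ, ∀ x h, x ∈ K' → x + h ∈ K' → x - h ∈ K' → h ≠ 0 →
            |f (x + h) - 2 * f x + f (x - h)| ≤ C * ‖h‖ := by
        intro K' hK'U hK'c
        obtain ⟨C, hC⟩ := hest (fun _ => 0) (by simp) K' hK'U hK'c
        refine ⟨C, fun x h h1 h2 h3 h4 => ?_⟩
        have := hC x h h1 h2 h3 h4
        rwa [pdMulti_zero_index f (fun _ => 0) (fun _ => rfl)] at this
      obtain ⟨C, hC⟩ := zyg_comp_base d U hU c hc hcU f hcont hZ K hK
      refine ⟨C, fun x h h1 h2 h3 h4 => ?_⟩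
      simpa [iteratedDeriv_zero, Function.comp] using hC x h h1 h2 h3 h4
  | succ m IH =>
    have hφ : ∀ i : Fin d, ContDiff ℝ (⊤ : ℕ∞) (fun t => deriv c t i) := by
      intro i
      have h1 : ContDiff ℝ (⊤ : ℕ∞) (deriv c) := (contDiff_infty_iff_deriv.mp hc).2
      exact (EuclideanSpace.proj (𝕜 := ℝ) i).contDiff.comp h1
    have hgi : ∀ i : Fin d, ZygmundClassR m (fun t => pd d i f (c t)) := by
      intro i
      have := IH (pd d i f) (ZygmundClassOn.pd_mem hU hf i)
      exact this
    have hterm : ∀ i : Fin d, ZygmundClassR m (fun t => deriv c t i * pd d i f (c t)) :=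
      fun i => ZygmundClassR.mul_smooth m _ _ (hφ i) (hgi i)
    have hsum : ZygmundClassR m (fun t => ∑ i, deriv c t i * pd d i f (c t)) :=
      ZygmundClassR.sum Finset.univ _ (fun i _ => hterm i)
    have hder : deriv (f ∘ c) = fun t => ∑ i, deriv c t i * pd d i f (c t) := by
      funext t
      have hfd : DifferentiableAt ℝ f (c t) := by
        have h1 : DifferentiableOn ℝ f U := hf.1.differentiableOn
          (by simp)
        exact h1.differentiableAt (hU.mem_nhds (hcU t))
      have hcd : HasDerivAt c (deriv c t) t :=
        ((hc.differentiable (by simp)) t).hasDerivAt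
      have h1 : HasDerivAt (f ∘ c) (fderiv ℝ f (c t) (deriv c t)) t :=
        hfd.hasFDerivAt.comp_hasDerivAt t hcd
      rw [h1.deriv]
      have hy : deriv c t = ∑ i, (deriv c t i) • EuclideanSpace.single i (1:ℝ) := by
        have h2 := (EuclideanSpace.basisFun (Fin d) ℝ).sum_repr (deriv c t)
        simp only [EuclideanSpace.basisFun_repr, EuclideanSpace.basisFun_apply] at h2
        exact h2.symm
      calc fderiv ℝ f (c t) (deriv c t)
          = fderiv ℝ f (c t) (∑ i, (deriv c t i) • EuclideanSpace.single i (1:ℝ)) := by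
            rw [← hy]
        _ = ∑ i, deriv c t i * pd d i f (c t) := by
            rw [map_sum]
            refine Finset.sum_congr rfl fun i _ => ?_
            rw [ContinuousLinearMap.map_smul]
            simp [pd, smul_eq_mul]
    constructor
    · have h1 : ContDiffOn ℝ (m + 1 : ℕ) (f ∘ c) Set.univ :=
        hf.1.comp (hc.of_le (natCast_le_topCast (m + 1))).contDiffOn (fun t _ => hcU t)
      rw [← contDiffOn_univ]
      exact h1
    · intro K hK
      obtain ⟨C, hC⟩ := hsum.2 K hK
      refine ⟨C, fun x h h1 h2 h3 h4 => ?_⟩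
      have e : iteratedDeriv (m + 1) (f ∘ c)
          = iteratedDeriv m (fun t => ∑ i, deriv c t i * pd d i f (c t)) := by
        rw [iteratedDeriv_succ', hder]
      rw [e]
      exact hC x h h1 h2 h3 h4
end

section
/- Let c_n ∈ C^∞(ℝ, ℝ^d) be a sequence of smooth curves that converges fast to 0, i.e. for every k ∈ ℕ, every j ∈ ℕ, and every compact interval K ⊆ ℝ one has sup_n sup_{t ∈ K} n^k |c_n^{(j)}(t)| < ∞. Let s_n ≥ 0 be real numbers with Σ_n s_n < ∞. Then there exist a smooth curve c ∈ C^∞(ℝ, ℝ^d) and a convergent sequence of real numbers t_n such that c(t + t_n) = c_n(t) for all |t| ≤ s_n and all n. -/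
open Real Filter Set Finset Topology

private lemma gcl_iFD_zero_of_eventually {E : Type*} [NormedAddCommGroup E] [NormedSpace ℝ E]
    {k : ℕ} {g : ℝ → E} {x : ℝ} (h : ∀ᶠ y in nhds x, g y = 0) :
    iteratedFDeriv ℝ k g x = 0 := by
  have h' : g =ᶠ[nhds x] (fun _ => (0 : E)) := h
  have h2 := (h'.filter_mono nhdsWithin_le_nhds).iteratedFDerivWithin_eq (𝕜 := ℝ) (s := Set.univ) h'.self_of_nhds k
  rw [← iteratedFDerivWithin_univ (𝕜 := ℝ) (f := g), h2, iteratedFDerivWithin_univ,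
    iteratedFDeriv_zero_fun]
  rfl

private lemma gcl_cont_iteratedDeriv {E : Type*} [NormedAddCommGroup E] [NormedSpace ℝ E]
    {g : ℝ → E} (hg : ContDiff ℝ (⊤ : ℕ∞) g) (i : ℕ) :
    Continuous (iteratedDeriv i g) := by
  have h : iteratedDeriv i g = fun x => (iteratedFDeriv ℝ i g x) (fun _ => (1:ℝ)) :=
    funext fun x => iteratedDeriv_eq_iteratedFDeriv
  rw [h]
  exact (continuous_eval_const _).comp
    (hg.continuous_iteratedFDeriv (by exact_mod_cast le_top))

private lemma gcl_norm_iteratedDeriv_const_le {E : Type*} [NormedAddCommGroup E]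
    [NormedSpace ℝ E] (i : ℕ) (a : E) (x : ℝ) :
    ‖iteratedDeriv i (fun _ : ℝ => a) x‖ ≤ ‖a‖ := by
  cases i with
  | zero => simp [iteratedDeriv_zero]
  | succ m =>
      rw [iteratedDeriv_eq_iteratedFDeriv, iteratedFDeriv_const_of_ne (Nat.succ_ne_zero m)]
      simp

/-- Global bounds on the iterated derivatives of the smooth transition function. -/
private lemma gcl_theta_bound (i : ℕ) : ∃ D : ℝ, 0 ≤ D ∧ ∀ x : ℝ,
    ‖iteratedDeriv i Real.smoothTransition x‖ ≤ D := by
  have hcont : ContinuousOn (iteratedDeriv i Real.smoothTransition)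
      (Set.Icc (-1 : ℝ) 2) :=
    (gcl_cont_iteratedDeriv Real.smoothTransition.contDiff i).continuousOn
  obtain ⟨M, hM⟩ := (isCompact_Icc (a := (-1:ℝ)) (b := 2)).exists_bound_of_continuousOn hcont
  refine ⟨max M 1, le_trans zero_le_one (le_max_right _ _), fun x => ?_⟩
  by_cases hx : x ∈ Set.Icc (-1 : ℝ) 2
  · exact le_trans (hM x hx) (le_max_left _ _)
  · rw [Set.mem_Icc, not_and_or] at hx
    push_neg at hx
    rcases hx with hx | hx
    · have hev : ∀ᶠ y in 𝓝 x, Real.smoothTransition y = (fun _ : ℝ => (0:ℝ)) y := by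
        filter_upwards [Iio_mem_nhds (show x < 0 by linarith)] with y hy
        exact Real.smoothTransition.zero_of_nonpos (le_of_lt hy)
      rw [Filter.EventuallyEq.iteratedDeriv_eq i hev]
      refine le_trans (gcl_norm_iteratedDeriv_const_le i (0:ℝ) x) ?_
      simp only [norm_zero]
      exact le_trans zero_le_one (le_max_right _ _)
    · have hev : ∀ᶠ y in 𝓝 x, Real.smoothTransition y = (fun _ : ℝ => (1:ℝ)) y := by
        filter_upwards [Ioi_mem_nhds (show (1:ℝ) < x by linarith)] with y hy
        exact Real.smoothTransition.one_of_one_le (le_of_lt hy)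
      rw [Filter.EventuallyEq.iteratedDeriv_eq i hev]
      refine le_trans (gcl_norm_iteratedDeriv_const_le i (1:ℝ) x) ?_
      simp only [norm_one]
      exact le_max_right _ _

private lemma gcl_bump1_bound {D : ℝ} {i : ℕ}
    (hD : ∀ x, ‖iteratedDeriv i Real.smoothTransition x‖ ≤ D)
    (r a : ℝ) (hr : 0 < r) (x : ℝ) :
    ‖iteratedDeriv i (fun y => Real.smoothTransition (r⁻¹ * (y - a))) x‖ ≤ r⁻¹ ^ i * D := by
  have h1 : (fun y : ℝ => Real.smoothTransition (r⁻¹ * (y - a)))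
      = fun y => Real.smoothTransition (r⁻¹ * (y + -a)) := by
    funext y; rw [sub_eq_add_neg]
  rw [h1]
  have h2 := congrFun (iteratedDeriv_comp_add_const i
    (fun z => Real.smoothTransition (r⁻¹ * z)) (-a)) x
  have h3 := congrFun (iteratedDeriv_comp_const_mul (n := i) (f := Real.smoothTransition)
    (Real.smoothTransition.contDiff) r⁻¹) (x + -a)
  have key : iteratedDeriv i (fun y => Real.smoothTransition (r⁻¹ * (y + -a))) x
      = r⁻¹ ^ i * iteratedDeriv i Real.smoothTransition (r⁻¹ * (x + -a)) := h2.trans h3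
  rw [key, norm_mul, norm_pow, Real.norm_eq_abs, abs_of_nonneg (inv_nonneg.2 hr.le)]
  exact mul_le_mul_of_nonneg_left (hD _) (pow_nonneg (inv_nonneg.2 hr.le) i)

private lemma gcl_bump2_bound {D : ℝ} {i : ℕ}
    (hD : ∀ x, ‖iteratedDeriv i Real.smoothTransition x‖ ≤ D)
    (r b : ℝ) (hr : 0 < r) (x : ℝ) :
    ‖iteratedDeriv i (fun y => Real.smoothTransition (r⁻¹ * (b - y))) x‖ ≤ r⁻¹ ^ i * D := by
  have h1 : (fun y : ℝ => Real.smoothTransition (r⁻¹ * (b - y)))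
      = fun y => Real.smoothTransition (r⁻¹ * (-y + b)) := by
    funext y; rw [sub_eq_neg_add]
  rw [h1]
  have h2 := iteratedDeriv_comp_neg i (fun z => Real.smoothTransition (r⁻¹ * (z + b))) x
  have h3 := congrFun (iteratedDeriv_comp_add_const i
    (fun z => Real.smoothTransition (r⁻¹ * z)) b) (-x)
  have h4 := congrFun (iteratedDeriv_comp_const_mul (n := i) (f := Real.smoothTransition)
    (Real.smoothTransition.contDiff) r⁻¹) (-x + b)
  have key : iteratedDeriv i (fun y => Real.smoothTransition (r⁻¹ * (-y + b))) x
      = ((-1 : ℝ) ^ i) • (r⁻¹ ^ i * iteratedDeriv i Real.smoothTransition (r⁻¹ * (-x + b))) := by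
    exact h2.trans (by rw [h3.trans h4])
  rw [key, norm_smul, norm_pow, norm_neg, norm_one, one_pow, one_mul, norm_mul, norm_pow,
    Real.norm_eq_abs, abs_of_nonneg (inv_nonneg.2 hr.le)]
  exact mul_le_mul_of_nonneg_left (hD _) (pow_nonneg (inv_nonneg.2 hr.le) i)

private lemma gcl_phi_bound : ∃ Eb : ℕ → ℝ, (∀ i, 0 ≤ Eb i) ∧ ∀ (i : ℕ) (r a b : ℝ), 0 < r →
    ∀ x : ℝ, ‖iteratedFDeriv ℝ i (fun y => Real.smoothTransition (r⁻¹ * (y - a)) *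
      Real.smoothTransition (r⁻¹ * (b - y))) x‖ ≤ r⁻¹ ^ i * (∑ p ∈ Finset.range (i+1),
        (i.choose p : ℝ) * Eb p * Eb (i - p)) := by
  choose D hD0 hD using gcl_theta_bound
  refine ⟨D, hD0, ?_⟩
  intro i r a b hr x
  have haff1 : ContDiff ℝ ((⊤ : ℕ∞) : WithTop ℕ∞) (fun y : ℝ => r⁻¹ * (y - a)) :=
    contDiff_const.mul (contDiff_id.sub contDiff_const)
  have haff2 : ContDiff ℝ ((⊤ : ℕ∞) : WithTop ℕ∞) (fun y : ℝ => r⁻¹ * (b - y)) :=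
    contDiff_const.mul (contDiff_const.sub contDiff_id)
  have hg1 : ContDiff ℝ ((⊤ : ℕ∞) : WithTop ℕ∞)
      (fun y : ℝ => Real.smoothTransition (r⁻¹ * (y - a))) :=
    Real.smoothTransition.contDiff.comp haff1
  have hg2 : ContDiff ℝ ((⊤ : ℕ∞) : WithTop ℕ∞)
      (fun y : ℝ => Real.smoothTransition (r⁻¹ * (b - y))) :=
    Real.smoothTransition.contDiff.comp haff2
  have hrinv : (0:ℝ) ≤ r⁻¹ := inv_nonneg.2 hr.le
  calc ‖iteratedFDeriv ℝ i (fun y => Real.smoothTransition (r⁻¹ * (y - a)) *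
        Real.smoothTransition (r⁻¹ * (b - y))) x‖
      ≤ ∑ p ∈ Finset.range (i+1), (i.choose p : ℝ) *
          ‖iteratedFDeriv ℝ p (fun y => Real.smoothTransition (r⁻¹ * (y - a))) x‖ *
          ‖iteratedFDeriv ℝ (i - p) (fun y => Real.smoothTransition (r⁻¹ * (b - y))) x‖ :=
        norm_iteratedFDeriv_mul_le hg1 hg2 x (by exact_mod_cast le_top)
    _ ≤ ∑ p ∈ Finset.range (i+1), (i.choose p : ℝ) *
          (r⁻¹ ^ p * D p) * (r⁻¹ ^ (i - p) * D (i - p)) := by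
        refine Finset.sum_le_sum fun p hp => ?_
        have h1 : ‖iteratedFDeriv ℝ p (fun y =>
            Real.smoothTransition (r⁻¹ * (y - a))) x‖ ≤ r⁻¹ ^ p * D p := by
          rw [norm_iteratedFDeriv_eq_norm_iteratedDeriv]
          exact gcl_bump1_bound (hD p) r a hr x
        have h2 : ‖iteratedFDeriv ℝ (i - p) (fun y =>
            Real.smoothTransition (r⁻¹ * (b - y))) x‖ ≤ r⁻¹ ^ (i - p) * D (i - p) := by
          rw [norm_iteratedFDeriv_eq_norm_iteratedDeriv]
          exact gcl_bump2_bound (hD (i - p)) r b hr x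
        have hc0 : (0:ℝ) ≤ (i.choose p : ℝ) := Nat.cast_nonneg _
        exact mul_le_mul (mul_le_mul_of_nonneg_left h1 hc0) h2 (norm_nonneg _)
          (mul_nonneg hc0 (mul_nonneg (pow_nonneg hrinv p) (hD0 p)))
    _ = r⁻¹ ^ i * (∑ p ∈ Finset.range (i+1), (i.choose p : ℝ) * D p * D (i - p)) := by
        rw [Finset.mul_sum]
        refine Finset.sum_congr rfl fun p hp => ?_
        have hpi : p ≤ i := Nat.lt_succ_iff.1 (Finset.mem_range.1 hp)
        have hpow : r⁻¹ ^ p * r⁻¹ ^ (i - p) = r⁻¹ ^ i := by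
          rw [← pow_add, Nat.add_sub_cancel' hpi]
        rw [← hpow]
        ring


/-- **General curve lemma (Lemma 3.2).** If `c_n : ℝ → ℝ^d` are smooth curves converging fast
to `0` (i.e. for all `k, j` and all compact intervals, `sup_n sup_t n^k ‖c_n^{(j)}(t)‖ < ∞`) and
`s_n ≥ 0` with `∑ s_n < ∞`, then there are a smooth curve `c` and a convergent sequence `t_n`
of reals with `c(t + t_n) = c_n(t)` for `|t| ≤ s_n` and all `n`. -/
theorem general_curve_lemma (d : ℕ) (c : ℕ → ℝ → EuclideanSpace ℝ (Fin d))
    (hc : ∀ n, ContDiff ℝ (⊤ : ℕ∞) (c n))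
    (hfast : ∀ k j : ℕ, ∀ a b : ℝ, ∃ M : ℝ, ∀ n : ℕ, ∀ t ∈ Set.Icc a b,
      (n : ℝ) ^ k * ‖iteratedDeriv j (c n) t‖ ≤ M)
    (s : ℕ → ℝ) (hs : ∀ n, 0 ≤ s n) (hsum : Summable s) :
    ∃ (γ : ℝ → EuclideanSpace ℝ (Fin d)) (t : ℕ → ℝ) (L : ℝ),
      ContDiff ℝ (⊤ : ℕ∞) γ ∧
      Filter.Tendsto t Filter.atTop (nhds L) ∧
      ∀ n : ℕ, ∀ u : ℝ, |u| ≤ s n → γ (u + t n) = c n u := by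
  classical
  set ρ : ℕ → ℝ := fun n => (((n : ℝ) + 1) ^ 2)⁻¹ with hρdef
  have hρpos : ∀ n, 0 < ρ n := fun n => by
    rw [hρdef]; positivity
  have hρle1 : ∀ n, ρ n ≤ 1 := fun n => by
    rw [hρdef]; dsimp only
    have h1 : (1:ℝ) ≤ ((n:ℝ)+1)^2 := by nlinarith [show (0:ℝ) ≤ (n:ℝ) from Nat.cast_nonneg n]
    exact inv_le_one_of_one_le₀ h1
  have hρsum : Summable ρ := by
    have h1 : Summable (fun n : ℕ => 1 / (n : ℝ) ^ 2) :=
      summable_one_div_nat_pow.2 one_lt_two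
    refine ((summable_nat_add_iff 1).2 h1).congr fun n => ?_
    rw [hρdef]; push_cast; rw [one_div]
  set ℓ : ℕ → ℝ := fun n => 2 * s n + 2 * ρ n with hℓdef
  have hℓpos : ∀ n, 0 < ℓ n := fun n => by
    rw [hℓdef]; have := hs n; have := hρpos n; dsimp only; linarith
  have hℓsum : Summable ℓ := by
    rw [hℓdef]; exact (hsum.mul_left 2).add (hρsum.mul_left 2)
  set T : ℕ → ℝ := fun n => ∑ m ∈ Finset.range n, ℓ m with hTdef
  set t : ℕ → ℝ := fun n => T n + s n + ρ n with htdef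
  have hTsucc : ∀ n, T (n + 1) = T n + ℓ n := fun n => by
    rw [hTdef]; exact Finset.sum_range_succ ℓ n
  have hTmono : ∀ m n : ℕ, m ≤ n → T m ≤ T n := fun m n h => by
    rw [hTdef]
    exact Finset.sum_le_sum_of_subset_of_nonneg (Finset.range_subset_range.2 h)
      (fun i _ _ => (hℓpos i).le)
  set φ : ℕ → ℝ → ℝ := fun n x =>
    Real.smoothTransition ((ρ n)⁻¹ * (x - T n)) *
    Real.smoothTransition ((ρ n)⁻¹ * (T n + ℓ n - x)) with hφdef
  set f : ℕ → ℝ → EuclideanSpace ℝ (Fin d) := fun n x => φ n x • c n (x - t n) with hfdef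
  -- basic facts
  have hφsm : ∀ n, ContDiff ℝ ((⊤ : ℕ∞) : WithTop ℕ∞) (φ n) := fun n => by
    rw [hφdef]
    exact (Real.smoothTransition.contDiff.comp
        (contDiff_const.mul (contDiff_id.sub contDiff_const))).mul
      (Real.smoothTransition.contDiff.comp
        (contDiff_const.mul (contDiff_const.sub contDiff_id)))
  have hcsm : ∀ n, ContDiff ℝ ((⊤ : ℕ∞) : WithTop ℕ∞) (fun y : ℝ => c n (y - t n)) :=
    fun n => (hc n).comp (contDiff_id.sub contDiff_const)
  have hfsm : ∀ n, ContDiff ℝ ((⊤ : ℕ∞) : WithTop ℕ∞) (f n) := fun n => by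
    rw [hfdef]; exact (hφsm n).smul (hcsm n)
  have hφone : ∀ n x, t n - s n ≤ x → x ≤ t n + s n → φ n x = 1 := by
    intro n x h1 h2
    rw [htdef] at h1 h2
    rw [hφdef]; dsimp only
    have hρ := hρpos n
    have e1 : (1:ℝ) ≤ (ρ n)⁻¹ * (x - T n) := by
      rw [← div_eq_inv_mul, le_div_iff₀ hρ]; dsimp only at h1; linarith
    have e2 : (1:ℝ) ≤ (ρ n)⁻¹ * (T n + ℓ n - x) := by
      rw [← div_eq_inv_mul, le_div_iff₀ hρ]
      rw [hℓdef]; dsimp only at h2 ⊢; linarith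
    rw [Real.smoothTransition.one_of_one_le e1, Real.smoothTransition.one_of_one_le e2,
      mul_one]
  have hfzero : ∀ n x, x ≤ T n ∨ T n + ℓ n ≤ x → f n x = 0 := by
    intro n x hx
    rw [hfdef, hφdef]; dsimp only
    rcases hx with hx | hx
    · rw [show Real.smoothTransition ((ρ n)⁻¹ * (x - T n)) = 0 from
        Real.smoothTransition.zero_of_nonpos
          (mul_nonpos_of_nonneg_of_nonpos (inv_nonneg.2 (hρpos n).le) (by linarith)),
        zero_mul, zero_smul]
    · rw [show Real.smoothTransition ((ρ n)⁻¹ * (T n + ℓ n - x)) = 0 from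
        Real.smoothTransition.zero_of_nonpos
          (mul_nonpos_of_nonneg_of_nonpos (inv_nonneg.2 (hρpos n).le) (by linarith)),
        mul_zero, zero_smul]
  -- the uniform derivative bounds
  have key : ∀ k : ℕ, ∃ V : ℕ → ℝ, Summable V ∧
      ∀ n x, ‖iteratedFDeriv ℝ k (f n) x‖ ≤ V n := by
    obtain ⟨Eb, hEb0, hEb⟩ := gcl_phi_bound
    set EE : ℕ → ℝ := fun i => ∑ p ∈ Finset.range (i+1), (i.choose p : ℝ) * Eb p * Eb (i-p)
      with hEEdef
    have hEE0 : ∀ i, 0 ≤ EE i := fun i => by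
      rw [hEEdef]
      exact Finset.sum_nonneg fun p _ =>
        mul_nonneg (mul_nonneg (Nat.cast_nonneg _) (hEb0 p)) (hEb0 _)
    have hφb : ∀ (i n : ℕ) (x : ℝ),
        ‖iteratedFDeriv ℝ i (φ n) x‖ ≤ (ρ n)⁻¹ ^ i * EE i := by
      intro i n x
      rw [hφdef, hEEdef]
      exact hEb i (ρ n) (T n) (T n + ℓ n) (hρpos n) x
    set B : ℝ := (∑' n, s n) + 1 with hBdef
    have hsB : ∀ n, s n + ρ n ≤ B := by
      intro n
      have h1 : s n ≤ ∑' m, s m := hsum.le_tsum n (fun j _ => hs j)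
      have h2 := hρle1 n
      rw [hBdef]; linarith
    intro k
    choose M0 hM0 using fun j => hfast 0 j (-B) B
    choose M1 hM1 using fun j => hfast (2*k+2) j (-B) B
    set Q : ℕ → ℕ → ℝ := fun j n =>
      if n = 0 then max (M0 j) 0 else max (M1 j) 0 / (n:ℝ)^(2*k+2) with hQdef
    have hQ0 : ∀ j n, 0 ≤ Q j n := by
      intro j n; rw [hQdef]; dsimp only
      split
      · exact le_max_right _ _
      · positivity
    have hQle : ∀ (j n : ℕ), ∀ τ ∈ Set.Icc (-B) B, ‖iteratedDeriv j (c n) τ‖ ≤ Q j n := by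
      intro j n τ hτ
      rw [hQdef]; dsimp only
      split
      · refine le_trans ?_ (le_max_left _ _)
        simpa using hM0 j n τ hτ
      · next h =>
        have hn : (0:ℝ) < (n:ℝ) := by
          exact_mod_cast Nat.pos_of_ne_zero h
        have hp : (0:ℝ) < (n:ℝ)^(2*k+2) := pow_pos hn _
        rw [le_div_iff₀ hp, mul_comm]
        exact le_trans (hM1 j n τ hτ) (le_max_left _ _)
    refine ⟨fun n => ∑ i ∈ Finset.range (k+1),
      (k.choose i : ℝ) * ((ρ n)⁻¹ ^ i * EE i) * Q (k-i) n, ?_, ?_⟩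
    · -- summability
      apply summable_sum
      intro i hi
      have hik : i ≤ k := Nat.lt_succ_iff.1 (Finset.mem_range.1 hi)
      refine (summable_nat_add_iff 1).mp ?_
      set K : ℝ := (k.choose i : ℝ) * EE i * max (M1 (k-i)) 0 * 4^(k+1) with hKdef
      refine Summable.of_nonneg_of_le ?_ ?_ (((summable_nat_add_iff 1).2 hρsum).mul_left K)
      · intro n
        exact mul_nonneg (mul_nonneg (Nat.cast_nonneg _)
          (mul_nonneg (pow_nonneg (inv_nonneg.2 (hρpos _).le) i) (hEE0 i))) (hQ0 _ _)
      · intro n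
        have hne : (n + 1 : ℕ) ≠ 0 := Nat.succ_ne_zero n
        have hQn1 : Q (k-i) (n+1) = max (M1 (k-i)) 0 / ((n+1:ℕ):ℝ)^(2*k+2) := by
          rw [hQdef]; dsimp only; rw [if_neg hne]
        have hρval : ρ (n+1) = ((((n:ℝ))+2)^2)⁻¹ := by
          rw [hρdef]; dsimp only; push_cast; ring_nf
        have hρinv : (ρ (n+1))⁻¹ = (((n:ℝ))+2)^2 := by rw [hρval, inv_inv]
        rw [hQn1, hρinv]
        have hX : (0:ℝ) < ((n:ℝ)+2)^2 := by positivity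
        have hP : (0:ℝ) < ((n+1:ℕ):ℝ)^(2*k+2) := by positivity
        have hdiv : (((n:ℝ)+2)^2)^i / ((n+1:ℕ):ℝ)^(2*k+2) ≤ 4^(k+1) / ((n:ℝ)+2)^2 := by
          rw [div_le_div_iff₀ hP hX]
          have hcast : ((n+1:ℕ):ℝ) = (n:ℝ)+1 := by push_cast; ring
          rw [hcast, ← pow_succ]
          have h1 : ((n:ℝ)+2)^2 ≤ 4*((n:ℝ)+1)^2 := by
            nlinarith [show (0:ℝ) ≤ (n:ℝ) from Nat.cast_nonneg n]
          calc (((n:ℝ)+2)^2)^(i+1) ≤ (4*((n:ℝ)+1)^2)^(i+1) :=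
                pow_le_pow_left₀ (by positivity) h1 _
            _ ≤ (4*((n:ℝ)+1)^2)^(k+1) := by
                refine pow_le_pow_right₀ ?_ (by omega)
                nlinarith [show (0:ℝ) ≤ (n:ℝ) from Nat.cast_nonneg n]
            _ = 4^(k+1) * ((n:ℝ)+1)^(2*k+2) := by
                rw [mul_pow, ← pow_mul, show 2*(k+1) = 2*k+2 from by ring]
        calc (k.choose i : ℝ) * ((((n:ℝ)+2)^2) ^ i * EE i) *
              (max (M1 (k-i)) 0 / ((n+1:ℕ):ℝ)^(2*k+2))
            = ((k.choose i : ℝ) * EE i * max (M1 (k-i)) 0) *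
              ((((n:ℝ)+2)^2)^i / ((n+1:ℕ):ℝ)^(2*k+2)) := by ring
          _ ≤ ((k.choose i : ℝ) * EE i * max (M1 (k-i)) 0) * (4^(k+1) / ((n:ℝ)+2)^2) := by
              refine mul_le_mul_of_nonneg_left hdiv ?_
              exact mul_nonneg (mul_nonneg (Nat.cast_nonneg _) (hEE0 i)) (le_max_right _ _)
          _ = K * ρ (n+1) := by
              rw [hKdef, hρval, div_eq_mul_inv]; ring
    · -- the pointwise bound
      intro n x
      by_cases hx : x ∈ Set.Ioo (T n) (T n + ℓ n)
      · have ht' : t n = T n + s n + ρ n := by rw [htdef]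
        have hl' : ℓ n = 2 * s n + 2 * ρ n := by rw [hℓdef]
        have hτ : x - t n ∈ Set.Icc (-B) B := by
          have h1 := hx.1; have h2 := hx.2
          have h3 := hsB n
          have h4 := hs n; have h5 := (hρpos n).le
          constructor
          · linarith
          · linarith
        have hsmul : ‖iteratedFDeriv ℝ k (f n) x‖ ≤ ∑ i ∈ Finset.range (k+1),
            (k.choose i : ℝ) * ‖iteratedFDeriv ℝ i (φ n) x‖ *
            ‖iteratedFDeriv ℝ (k-i) (fun y => c n (y - t n)) x‖ := by
          simp only [hfdef]
          exact norm_iteratedFDeriv_smul_le (hφsm n) (hcsm n) x (by exact_mod_cast le_top)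
        refine le_trans hsmul (Finset.sum_le_sum fun i _ => ?_)
        have h1 := hφb i n x
        have h2 : ‖iteratedFDeriv ℝ (k-i) (fun y => c n (y - t n)) x‖ ≤ Q (k-i) n := by
          have e1 : (fun y : ℝ => c n (y - t n)) = fun y => c n (y + -(t n)) := by
            funext y; rw [sub_eq_add_neg]
          rw [norm_iteratedFDeriv_eq_norm_iteratedDeriv, e1,
            congrFun (iteratedDeriv_comp_add_const (k-i) (c n) (-(t n))) x,
            ← sub_eq_add_neg]
          exact hQle (k-i) n _ hτ
        exact mul_le_mul (mul_le_mul_of_nonneg_left h1 (Nat.cast_nonneg _)) h2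
          (norm_nonneg _)
          (mul_nonneg (Nat.cast_nonneg _)
            (mul_nonneg (pow_nonneg (inv_nonneg.2 (hρpos n).le) i) (hEE0 i)))
      · have hz : iteratedFDeriv ℝ k (f n) x = 0 := by
          have hEqOn : Set.EqOn (iteratedFDeriv ℝ k (f n)) (fun _ => 0)
              (Set.Iio (T n) ∪ Set.Ioi (T n + ℓ n)) := by
            intro y hy
            apply gcl_iFD_zero_of_eventually
            rcases hy with hy | hy
            · filter_upwards [Iio_mem_nhds hy] with z hz
              exact hfzero n z (Or.inl hz.le)
            · filter_upwards [Ioi_mem_nhds hy] with z hz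
              exact hfzero n z (Or.inr hz.le)
          have hcont : Continuous (iteratedFDeriv ℝ k (f n)) :=
            (hfsm n).continuous_iteratedFDeriv (by exact_mod_cast le_top)
          have hxcl : x ∈ closure (Set.Iio (T n) ∪ Set.Ioi (T n + ℓ n)) := by
            rw [closure_union, closure_Iio, closure_Ioi]
            rw [Set.mem_Ioo, not_and_or] at hx
            push_neg at hx
            rcases hx with hx | hx
            · exact Or.inl hx
            · exact Or.inr hx
          exact (hEqOn.closure hcont continuous_const) hxcl
        rw [hz]
        simp only [norm_zero]
        exact Finset.sum_nonneg fun i _ => mul_nonneg (mul_nonneg (Nat.cast_nonneg _)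
          (mul_nonneg (pow_nonneg (inv_nonneg.2 (hρpos n).le) i) (hEE0 i))) (hQ0 _ _)
  refine ⟨fun x => ∑' n, f n x, t, (∑' n, ℓ n) + 0 + 0, ?_, ?_, ?_⟩
  · -- smoothness
    choose V hVsum hVb using key
    exact contDiff_tsum (N := (⊤ : ℕ∞)) (fun n => hfsm n) (fun k _ => hVsum k)
      (fun k n x _ => hVb k n x)
  · -- convergence of t
    refine Filter.Tendsto.add (Filter.Tendsto.add ?_ hsum.tendsto_atTop_zero)
      hρsum.tendsto_atTop_zero
    rw [hTdef]
    exact hℓsum.hasSum.tendsto_sum_nat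
  · -- matching
    intro n u hu
    rw [abs_le] at hu
    have h1 : ∑' m, f m (u + t n) = f n (u + t n) := by
      apply tsum_eq_single
      intro m hm
      rcases lt_or_gt_of_ne hm with hlt | hgt
      · -- m < n : the point is to the right of the m-th block
        apply hfzero
        right
        have e1 : T (m + 1) ≤ T n := hTmono _ _ hlt
        rw [hTsucc] at e1
        have ht' : t n = T n + s n + ρ n := by rw [htdef]
        have := hρpos n
        linarith [hu.1]
      · -- m > n : the point is to the left of the m-th block
        apply hfzero
        left
        have e1 : T (n + 1) ≤ T m := hTmono _ _ hgt
        rw [hTsucc] at e1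
        have ht' : t n = T n + s n + ρ n := by rw [htdef]
        have hl' : ℓ n = 2 * s n + 2 * ρ n := by rw [hℓdef]
        have := hρpos n
        linarith [hu.2]
    show (∑' m, f m (u + t n)) = c n u
    rw [h1, hfdef]; dsimp only
    rw [hφone n (u + t n) (by linarith [hu.1]) (by linarith [hu.2]),
      add_sub_cancel_right, one_smul]
end

section
/- Let α ∈ (0,1], let U ⊆ ℝ^d be open, and let f : U → ℝ be a function. The following are equivalent: (1) f ∘ c ∈ C^{0,α}(ℝ) for every c ∈ C^∞(ℝ, U); (2) f ∈ C^{0,α}(U). -/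
/-- The Hölder class `C^{0,α}(U)` for `U ⊆ ℝ^d`: functions `α`-Hölder on every compact
`K ⊆ U`. -/
def HolderZeroOn (d : ℕ) (α : ℝ) (f : EuclideanSpace ℝ (Fin d) → ℝ)
    (U : Set (EuclideanSpace ℝ (Fin d))) : Prop :=
  ∀ K : Set (EuclideanSpace ℝ (Fin d)), K ⊆ U → IsCompact K →
    ∃ C : ℝ, ∀ x h : EuclideanSpace ℝ (Fin d), x ∈ K → x + h ∈ K → h ≠ 0 →
      |f (x + h) - f x| ≤ C * ‖h‖ ^ α

/-- The Hölder class `C^{0,α}(ℝ)`. -/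
def HolderZeroR (α : ℝ) (f : ℝ → ℝ) : Prop :=
  ∀ K : Set ℝ, IsCompact K →
    ∃ C : ℝ, ∀ x h : ℝ, x ∈ K → x + h ∈ K → h ≠ 0 →
      |f (x + h) - f x| ≤ C * |h| ^ α

open Real Filter Topology Metric Finset

namespace HolderAux

noncomputable section





/-- The plateau-linear profile: `0` for `s ≤ 1`, equal to `s - 2` on `[2,3]`, `0` for `s ≥ 4`. -/
def Fp : ℝ → ℝ := fun s =>
  (s - 2) * (Real.smoothTransition (s - 1) * Real.smoothTransition (4 - s))

lemma Fp_contDiff : ContDiff ℝ (⊤ : ℕ∞) Fp := by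
  unfold Fp
  exact (contDiff_id.sub contDiff_const).mul
    ((Real.smoothTransition.contDiff.comp (contDiff_id.sub contDiff_const)).mul
      (Real.smoothTransition.contDiff.comp (contDiff_const.sub contDiff_id)))

lemma Fp_zero_left {s : ℝ} (h : s ≤ 1) : Fp s = 0 := by
  simp [Fp, Real.smoothTransition.zero_of_nonpos (by linarith : s - 1 ≤ 0)]

lemma Fp_zero_right {s : ℝ} (h : 4 ≤ s) : Fp s = 0 := by
  simp [Fp, Real.smoothTransition.zero_of_nonpos (by linarith : 4 - s ≤ 0)]

lemma Fp_lin {s : ℝ} (h2 : 2 ≤ s) (h3 : s ≤ 3) : Fp s = s - 2 := by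
  rw [Fp, Real.smoothTransition.one_of_one_le (by linarith : (1:ℝ) ≤ s - 1),
    Real.smoothTransition.one_of_one_le (by linarith : (1:ℝ) ≤ 4 - s)]
  ring

lemma Fp_abs (s : ℝ) : |Fp s| ≤ 2 := by
  rcases le_or_gt s 1 with h | h
  · simp [Fp_zero_left h]
  rcases le_or_gt 4 s with h' | h'
  · simp [Fp_zero_right h']
  have h1 : |s - 2| ≤ 2 := by rw [abs_le]; constructor <;> linarith
  have h2 : |Real.smoothTransition (s-1) * Real.smoothTransition (4-s)| ≤ 1 := by
    rw [abs_of_nonneg (mul_nonneg (Real.smoothTransition.nonneg _)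
      (Real.smoothTransition.nonneg _))]
    exact mul_le_one₀ (Real.smoothTransition.le_one _) (Real.smoothTransition.nonneg _)
      (Real.smoothTransition.le_one _)
  calc |Fp s| = |s - 2| * |_root_.Real.smoothTransition (s-1) * Real.smoothTransition (4-s)| := by
        rw [Fp, abs_mul]
    _ ≤ 2 * 1 := mul_le_mul h1 h2 (abs_nonneg _) (by norm_num)
    _ = 2 := by norm_num

/-- Global bounds for iterated derivatives of a smooth function constant near `±∞`. -/
lemma exists_iD_bound (g : ℝ → ℝ) (hg : ContDiff ℝ (⊤ : ℕ∞) g) (a b c₁ c₂ : ℝ)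
    (hab : a ≤ b) (h₁ : ∀ s, s ≤ a → g s = c₁) (h₂ : ∀ s, b ≤ s → g s = c₂) (k : ℕ) :
    ∃ D : ℝ, 0 ≤ D ∧ ∀ s, ‖iteratedDeriv k g s‖ ≤ D := by
  have hcont : ContinuousOn (iteratedDeriv k g) (Set.Icc a b) := by
    refine Continuous.continuousOn ?_
    have : Continuous (iteratedFDeriv ℝ k g) :=
      hg.continuous_iteratedFDeriv (by exact_mod_cast le_top)
    rw [iteratedDeriv_eq_equiv_comp]
    exact (LinearIsometryEquiv.continuous _).comp this
  obtain ⟨C, hC⟩ := (isCompact_Icc (a := a) (b := b)).exists_bound_of_continuousOn hcont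
  refine ⟨max (max C ‖c₁‖) ‖c₂‖, le_max_of_le_left (le_max_of_le_right (norm_nonneg _)), ?_⟩
  intro s
  rcases lt_or_ge s a with hs | hs
  · have he : g =ᶠ[𝓝 s] fun _ => c₁ := by
      filter_upwards [Iio_mem_nhds hs] with t ht
      exact h₁ t (le_of_lt ht)
    rw [he.iteratedDeriv_eq k]
    rcases Nat.eq_zero_or_pos k with hk | hk
    · subst hk
      simpa using le_max_of_le_left (le_max_right _ _)
    · have : iteratedDeriv k (fun _ : ℝ => c₁) s = 0 := by
        rw [iteratedDeriv_eq_equiv_comp, Function.comp_apply,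
          iteratedFDeriv_const_of_ne (Nat.pos_iff_ne_zero.mp hk)]
        simp
      rw [this]
      simpa using le_max_of_le_left (le_max_of_le_left
        ((norm_nonneg _).trans (hC a ⟨le_refl a, hab⟩)))
  rcases le_or_gt s b with hs' | hs'
  · exact le_max_of_le_left (le_max_of_le_left (hC s ⟨hs, hs'⟩))
  · have he : g =ᶠ[𝓝 s] fun _ => c₂ := by
      filter_upwards [Ioi_mem_nhds hs'] with t ht
      exact h₂ t (le_of_lt ht)
    rw [he.iteratedDeriv_eq k]
    rcases Nat.eq_zero_or_pos k with hk | hk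
    · subst hk
      simpa using le_max_right _ _
    · have : iteratedDeriv k (fun _ : ℝ => c₂) s = 0 := by
        rw [iteratedDeriv_eq_equiv_comp, Function.comp_apply,
          iteratedFDeriv_const_of_ne (Nat.pos_iff_ne_zero.mp hk)]
        simp
      rw [this]
      simpa using le_max_of_le_left (le_max_of_le_left
        ((norm_nonneg _).trans (hC a ⟨le_refl a, hab⟩)))





variable {E : Type*} [NormedAddCommGroup E] [NormedSpace ℝ E]

lemma iD_smul_const (g : ℝ → ℝ) (hg : ContDiff ℝ (⊤ : ℕ∞) g) (w : E) (k : ℕ) :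
    iteratedDeriv k (fun s => g s • w) = fun s => iteratedDeriv k g s • w := by
  induction k with
  | zero => simp [iteratedDeriv_zero]
  | succ k ih =>
    funext s
    rw [iteratedDeriv_succ, ih, iteratedDeriv_succ]
    exact deriv_smul_const
      ((hg.differentiable_iteratedDeriv k (by exact_mod_cast WithTop.coe_lt_top k)).differentiableAt) w

lemma summand_bound (g : ℝ → ℝ) (hg : ContDiff ℝ (⊤ : ℕ∞) g)
    (D : ℝ) (k : ℕ) (hD : ∀ s, ‖iteratedDeriv k g s‖ ≤ D) (η B : ℝ) (hη : 0 < η) (w : E)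
    (t : ℝ) :
    ‖iteratedFDeriv ℝ k (fun t => g ((t - B) / η) • w) t‖ ≤ η⁻¹ ^ k * D * ‖w‖ := by
  have hG : ContDiff ℝ (⊤ : ℕ∞) (fun s => g s • w) := hg.smul contDiff_const
  have hfun : (fun t => g ((t - B) / η) • w)
      = fun t => (fun z => (fun s => g s • w) (η⁻¹ * z)) (t + (-B)) := by
    funext t
    congr 2
    field_simp
    ring
  rw [hfun, norm_iteratedFDeriv_eq_norm_iteratedDeriv]
  rw [iteratedDeriv_comp_add_const k (fun z => (fun s => g s • w) (η⁻¹ * z)) (-B)]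
  have h1 : iteratedDeriv k (fun z => (fun s => g s • w) (η⁻¹ * z))
      = fun z => η⁻¹ ^ k • iteratedDeriv k (fun s => g s • w) (η⁻¹ * z) :=
    iteratedDeriv_comp_const_smul (hG.of_le (by exact_mod_cast le_top)) η⁻¹
  rw [h1, iD_smul_const g hg w k]
  rw [norm_smul, norm_smul]
  have h2 : ‖η⁻¹ ^ k‖ = η⁻¹ ^ k := by
    rw [Real.norm_eq_abs, abs_pow, abs_of_nonneg (inv_nonneg.mpr hη.le)]
  rw [h2, mul_assoc]
  refine mul_le_mul_of_nonneg_left ?_ (pow_nonneg (inv_nonneg.mpr hη.le) k)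
  exact mul_le_mul_of_nonneg_right (by simpa using hD _) (norm_nonneg w)

lemma key_pow (j k : ℕ) :
    (2:ℝ) ^ (j*k) * ((2:ℝ)⁻¹) ^ ((j+6)^2) ≤ (2:ℝ) ^ (k^2) * ((2:ℝ)⁻¹) ^ j := by
  rw [inv_pow, inv_pow, ← div_eq_mul_inv, ← div_eq_mul_inv,
    div_le_div_iff₀ (by positivity) (by positivity), ← pow_add, ← pow_add]
  refine pow_le_pow_right₀ (by norm_num) ?_
  have hjk : j*k ≤ k^2 + j^2 := by
    rcases le_total j k with h | h
    · calc j*k ≤ k*k := Nat.mul_le_mul_right k h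
        _ ≤ k^2 + j^2 := by nlinarith
    · calc j*k ≤ j*j := Nat.mul_le_mul_left j h
        _ ≤ k^2 + j^2 := by nlinarith
  nlinarith

lemma tsum_telescope (q : ℕ → E) (x : E) (hq : Summable fun i => q i - q (i+1))
    (hlim : Tendsto q atTop (𝓝 x)) : ∑' i, (q i - q (i+1)) = q 0 - x := by
  refine tendsto_nhds_unique hq.hasSum.tendsto_sum_nat ?_
  have h : (fun n => ∑ i ∈ range n, (q i - q (i+1))) = fun n => q 0 - q n :=
    funext fun n => Finset.sum_range_sub' q n
  rw [h]
  exact tendsto_const_nhds.sub hlim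

lemma exists_rate_subseq (z : ℕ → E) (x : E) (hz : Tendsto z atTop (𝓝 x))
    (ε : ℕ → ℝ) (hε : ∀ j, 0 < ε j) :
    ∃ ψ : ℕ → ℕ, StrictMono ψ ∧ ∀ j, ‖z (ψ j) - x‖ ≤ ε j := by
  have key : ∀ j N₀ : ℕ, ∃ N, N₀ ≤ N ∧ ‖z N - x‖ ≤ ε j := by
    intro j N₀
    obtain ⟨N₁, hN₁⟩ := (Metric.tendsto_atTop.mp hz (ε j) (hε j))
    exact ⟨max N₀ N₁, le_max_left _ _,
      by rw [← dist_eq_norm]; exact (hN₁ _ (le_max_right _ _)).le⟩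
  choose Nf hNf1 hNf2 using key
  refine ⟨fun j => Nat.rec (Nf 0 0) (fun j ih => Nf (j+1) (ih + 1)) j, ?_, ?_⟩
  · apply strictMono_nat_of_lt_succ
    intro n
    exact lt_of_lt_of_le (Nat.lt_succ_self _) (hNf1 (n+1) _)
  · intro j
    cases j with
    | zero => exact hNf2 0 0
    | succ j => exact hNf2 (j+1) _





def θf (j : ℕ) : ℝ := (2:ℝ)⁻¹ ^ ((j+6)^2)
def wf (j : ℕ) : ℝ := (2:ℝ)⁻¹ ^ j
def ηf (j : ℕ) : ℝ := wf j / 16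
def Af (j : ℕ) : ℝ := wf j / 2
def Bf (j : ℕ) : ℝ := 3 * wf j / 4
def Tf (j : ℕ) : ℝ := 7 * wf j / 8

lemma wf_pos (j : ℕ) : 0 < wf j := by unfold wf; positivity
lemma wf_le_one (j : ℕ) : wf j ≤ 1 := pow_le_one₀ (by norm_num) (by norm_num)
lemma ηf_pos (j : ℕ) : 0 < ηf j := by unfold ηf wf; positivity
lemma ηf_le_one (j : ℕ) : ηf j ≤ 1 := by
  have := wf_le_one j; have := wf_pos j; unfold ηf; linarith
lemma θf_pos (j : ℕ) : 0 < θf j := by unfold θf; positivity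
lemma θf_le (j : ℕ) : θf j ≤ (2:ℝ)⁻¹ ^ (j+6) :=
  pow_le_pow_of_le_one (by norm_num) (by norm_num) (Nat.le_self_pow (by norm_num) _)
lemma θf_succ_le (j : ℕ) : θf (j+1) ≤ θf j :=
  pow_le_pow_of_le_one (by norm_num) (by norm_num) (Nat.pow_le_pow_left (by omega) 2)
lemma wf_mono {i j : ℕ} (h : i ≤ j) : wf j ≤ wf i :=
  pow_le_pow_of_le_one (by norm_num) (by norm_num) h
lemma wf_half {i j : ℕ} (h : i < j) : wf j ≤ wf i / 2 := by
  have h1 : wf j ≤ wf (i+1) := wf_mono h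
  have h2 : wf (i+1) = wf i * 2⁻¹ := pow_succ _ _
  rw [h2] at h1; linarith

lemma θf_mono {i j : ℕ} (h : i ≤ j) : θf j ≤ θf i :=
  pow_le_pow_of_le_one (by norm_num) (by norm_num) (Nat.pow_le_pow_left (by omega) 2)

lemma summable_θf : Summable θf := by
  refine Summable.of_nonneg_of_le (fun j => (θf_pos j).le) (fun j => θf_le j) ?_
  have : (fun j : ℕ => (2:ℝ)⁻¹ ^ (j+6)) = fun j : ℕ => (2:ℝ)⁻¹ ^ j * (2:ℝ)⁻¹ ^ 6 := by
    funext j; rw [pow_add]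
  rw [this]
  exact (summable_geometric_of_lt_one (by norm_num) (by norm_num)).mul_right _

lemma tsum_θf_le : ∑' j, θf j ≤ 1/32 := by
  have hg : Summable (fun j : ℕ => (2:ℝ)⁻¹ ^ j * (2:ℝ)⁻¹ ^ 6) :=
    (summable_geometric_of_lt_one (by norm_num) (by norm_num)).mul_right _
  have h1 : ∑' j, θf j ≤ ∑' j : ℕ, (2:ℝ)⁻¹ ^ j * (2:ℝ)⁻¹ ^ 6 := by
    refine Summable.tsum_le_tsum (fun j => ?_) summable_θf hg
    rw [← pow_add]; exact θf_le j
  have h2 : ∑' j : ℕ, (2:ℝ)⁻¹ ^ j * (2:ℝ)⁻¹ ^ 6 = 2 * (2:ℝ)⁻¹ ^ 6 := by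
    rw [tsum_mul_right, tsum_geometric_of_lt_one (by norm_num) (by norm_num)]
    norm_num
  rw [h2] at h1; linarith [h1]; 






variable {E : Type*} [NormedAddCommGroup E] [NormedSpace ℝ E]

/-- One building block of the special curve. -/
def uf (Δ W : ℕ → E) (j : ℕ) (t : ℝ) : E :=
  Real.smoothTransition ((t - Af j) / ηf j) • Δ j + Fp ((t - Bf j) / ηf j) • W j

lemma uf_contDiff (Δ W : ℕ → E) (j : ℕ) : ContDiff ℝ (⊤ : ℕ∞) (uf Δ W j) := by
  apply ContDiff.add
  · exact (Real.smoothTransition.contDiff.comp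
      ((contDiff_id.sub contDiff_const).div_const _)).smul contDiff_const
  · exact (Fp_contDiff.comp ((contDiff_id.sub contDiff_const).div_const _)).smul contDiff_const

lemma uf_bound (Δ W : ℕ → E) (Dst DF : ℝ) (k j : ℕ)
    (hDst : ∀ s, ‖iteratedDeriv k Real.smoothTransition s‖ ≤ Dst)
    (hDF : ∀ s, ‖iteratedDeriv k Fp s‖ ≤ DF) (t : ℝ) :
    ‖iteratedFDeriv ℝ k (uf Δ W j) t‖
      ≤ (16 ^ k * (2:ℝ) ^ (j * k)) * (Dst * ‖Δ j‖ + DF * ‖W j‖) := by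
  have e1 : uf Δ W j = (fun t => Real.smoothTransition ((t - Af j) / ηf j) • Δ j)
      + fun t => Fp ((t - Bf j) / ηf j) • W j := rfl
  have c1 : ContDiff ℝ (⊤ : ℕ∞) (fun t : ℝ => Real.smoothTransition ((t - Af j) / ηf j) • Δ j) :=
    (Real.smoothTransition.contDiff.comp
      ((contDiff_id.sub contDiff_const).div_const _)).smul contDiff_const
  have c2 : ContDiff ℝ (⊤ : ℕ∞) (fun t : ℝ => Fp ((t - Bf j) / ηf j) • W j) :=
    (Fp_contDiff.comp ((contDiff_id.sub contDiff_const).div_const _)).smul contDiff_const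
  rw [e1, iteratedFDeriv_add_apply (c1.of_le (by exact_mod_cast le_top)).contDiffAt
    (c2.of_le (by exact_mod_cast le_top)).contDiffAt]
  have hb1 := summand_bound Real.smoothTransition Real.smoothTransition.contDiff Dst k hDst
    (ηf j) (Af j) (ηf_pos j) (Δ j) t
  have hb2 := summand_bound Fp Fp_contDiff DF k hDF (ηf j) (Bf j) (ηf_pos j) (W j) t
  have hηinv : (ηf j)⁻¹ = 16 * (2:ℝ) ^ j := by
    rw [ηf, wf, inv_div, div_eq_mul_inv, inv_pow, inv_inv]
  have hX : (ηf j)⁻¹ ^ k = 16 ^ k * (2:ℝ) ^ (j * k) := by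
    rw [hηinv, mul_pow, pow_mul]
  calc ‖iteratedFDeriv ℝ k (fun t => Real.smoothTransition ((t - Af j) / ηf j) • Δ j) t
        + iteratedFDeriv ℝ k (fun t => Fp ((t - Bf j) / ηf j) • W j) t‖
      ≤ ‖iteratedFDeriv ℝ k (fun t => Real.smoothTransition ((t - Af j) / ηf j) • Δ j) t‖
        + ‖iteratedFDeriv ℝ k (fun t => Fp ((t - Bf j) / ηf j) • W j) t‖ := norm_add_le _ _
    _ ≤ (ηf j)⁻¹ ^ k * Dst * ‖Δ j‖ + (ηf j)⁻¹ ^ k * DF * ‖W j‖ := add_le_add hb1 hb2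
    _ = (16 ^ k * (2:ℝ) ^ (j * k)) * (Dst * ‖Δ j‖ + DF * ‖W j‖) := by rw [hX]; ring

lemma uf_eval_lt (Δ W : ℕ → E) {i j : ℕ} (hij : i < j) {τ : ℝ} (hτ0 : 0 ≤ τ)
    (hτη : τ ≤ ηf j) : uf Δ W i (Tf j + τ) = 0 := by
  have hwi := wf_pos i
  have hwj := wf_pos j
  have hw2 := wf_half hij
  have hη : ηf j = wf j / 16 := rfl
  have hst : Real.smoothTransition ((Tf j + τ - Af i) / ηf i) = 0 := by
    apply Real.smoothTransition.zero_of_nonpos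
    apply div_nonpos_of_nonpos_of_nonneg _ (ηf_pos i).le
    simp only [Tf, Af]
    rw [hη] at hτη
    linarith
  have hFp : Fp ((Tf j + τ - Bf i) / ηf i) = 0 := by
    apply Fp_zero_left
    rw [div_le_one (ηf_pos i)]
    simp only [Tf, Bf, ηf]
    rw [hη] at hτη
    linarith
  simp only [uf, hst, hFp, zero_smul, add_zero]

lemma uf_eval_gt (Δ W : ℕ → E) {i j : ℕ} (hij : j < i) {τ : ℝ} (hτ0 : 0 ≤ τ)
    (hτη : τ ≤ ηf j) : uf Δ W i (Tf j + τ) = Δ i := by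
  have hwi := wf_pos i
  have hwj := wf_pos j
  have hw2 := wf_half hij
  have hst : Real.smoothTransition ((Tf j + τ - Af i) / ηf i) = 1 := by
    apply Real.smoothTransition.one_of_one_le
    rw [one_le_div (ηf_pos i)]
    simp only [Tf, Af, ηf]
    linarith
  have hFp : Fp ((Tf j + τ - Bf i) / ηf i) = 0 := by
    apply Fp_zero_right
    rw [le_div_iff₀ (ηf_pos i)]
    simp only [Tf, Bf, ηf]
    linarith
  simp only [uf, hst, hFp, zero_smul, add_zero, one_smul]

lemma uf_eval_eq (Δ W : ℕ → E) (j : ℕ) {τ : ℝ} (hτ0 : 0 ≤ τ) (hτη : τ ≤ ηf j) :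
    uf Δ W j (Tf j + τ) = Δ j + (τ / ηf j) • W j := by
  have hwj := wf_pos j
  have hst : Real.smoothTransition ((Tf j + τ - Af j) / ηf j) = 1 := by
    apply Real.smoothTransition.one_of_one_le
    rw [one_le_div (ηf_pos j)]
    simp only [Tf, Af, ηf]
    linarith
  have harg : (Tf j + τ - Bf j) / ηf j = 2 + τ / ηf j := by
    simp only [Tf, Bf, ηf]
    field_simp
    ring
  have h01 : 0 ≤ τ / ηf j := div_nonneg hτ0 (ηf_pos j).le
  have h02 : τ / ηf j ≤ 1 := (div_le_one (ηf_pos j)).mpr hτη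
  have hFp : Fp ((Tf j + τ - Bf j) / ηf j) = τ / ηf j := by
    rw [harg, Fp_lin (by linarith) (by linarith)]
    ring
  simp only [uf, hst, hFp, one_smul]

variable {E : Type*} [NormedAddCommGroup E] [NormedSpace ℝ E] [CompleteSpace E]

lemma curve_exists (x : E) (p : ℕ → E) (W : ℕ → E) (r : ℝ) (hr : 0 < r)
    (hp : ∀ j, ‖p j - x‖ ≤ r * θf j) (hW : ∀ j, ‖W j‖ ≤ r * θf j) :
    ∃ c : ℝ → E, ContDiff ℝ (⊤ : ℕ∞) c ∧ (∀ t, ‖c t - x‖ < r) ∧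
      ∀ (j : ℕ) (τ : ℝ), 0 ≤ τ → τ ≤ ηf j → c (Tf j + τ) = p j + (τ / ηf j) • W j := by
  choose Dst hDst0 hDst using fun k : ℕ => exists_iD_bound _ Real.smoothTransition.contDiff
    0 1 0 1 (by norm_num) (fun s hs => Real.smoothTransition.zero_of_nonpos hs)
    (fun s hs => Real.smoothTransition.one_of_one_le hs) k
  choose DF hDF0 hDF using fun k : ℕ => exists_iD_bound _ Fp_contDiff 1 4 0 0 (by norm_num)
    (fun s hs => Fp_zero_left hs) (fun s hs => Fp_zero_right hs) k
  set Δ : ℕ → E := fun j => p j - p (j+1) with hΔdef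
  have hΔ : ∀ j, ‖Δ j‖ ≤ 2 * (r * θf j) := by
    intro j
    have h1 := hp j; have h2 := hp (j+1)
    have h3 : r * θf (j+1) ≤ r * θf j := mul_le_mul_of_nonneg_left (θf_succ_le j) hr.le
    calc ‖Δ j‖ = ‖(p j - x) - (p (j+1) - x)‖ := by rw [hΔdef]; congr 1; abel
      _ ≤ ‖p j - x‖ + ‖p (j+1) - x‖ := norm_sub_le _ _
      _ ≤ 2 * (r * θf j) := by linarith
  have hrθ : ∀ j, 0 ≤ r * θf j := fun j => mul_nonneg hr.le (θf_pos j).le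
  -- master derivative bound
  have hbound : ∀ (k : ℕ) (j : ℕ) (t : ℝ), ‖iteratedFDeriv ℝ k (uf Δ W j) t‖
      ≤ (16 ^ k * (Dst k + DF k) * (3 * r)) * ((2:ℝ) ^ (j*k) * θf j) := by
    intro k j t
    refine (uf_bound Δ W (Dst k) (DF k) k j (hDst k) (hDF k) t).trans ?_
    have h1 : Dst k * ‖Δ j‖ + DF k * ‖W j‖ ≤ (Dst k + DF k) * (3 * r) * θf j := by
      have b1 : Dst k * ‖Δ j‖ ≤ Dst k * (2 * (r * θf j)) :=
        mul_le_mul_of_nonneg_left (hΔ j) (hDst0 k)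
      have b2 : DF k * ‖W j‖ ≤ DF k * (r * θf j) :=
        mul_le_mul_of_nonneg_left (hW j) (hDF0 k)
      have c1 : 0 ≤ Dst k := hDst0 k
      have c2 : 0 ≤ DF k := hDF0 k
      have c3 := hrθ j
      nlinarith
    have h2 : (0:ℝ) ≤ 16 ^ k * (2:ℝ) ^ (j*k) := by positivity
    calc (16 ^ k * (2:ℝ) ^ (j * k)) * (Dst k * ‖Δ j‖ + DF k * ‖W j‖)
        ≤ (16 ^ k * (2:ℝ) ^ (j * k)) * ((Dst k + DF k) * (3 * r) * θf j) :=
          mul_le_mul_of_nonneg_left h1 h2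
      _ = (16 ^ k * (Dst k + DF k) * (3 * r)) * ((2:ℝ) ^ (j*k) * θf j) := by ring
  -- summability of the bounds
  have hv : ∀ k : ℕ, Summable (fun j : ℕ =>
      (16 ^ k * (Dst k + DF k) * (3 * r)) * ((2:ℝ) ^ (j*k) * θf j)) := by
    intro k
    apply Summable.mul_left
    refine Summable.of_nonneg_of_le
      (fun j => mul_nonneg (by positivity) (θf_pos j).le) (fun j => ?_)
      (Summable.mul_left ((2:ℝ) ^ (k^2))
        (summable_geometric_of_lt_one (r := (2:ℝ)⁻¹) (by norm_num) (by norm_num)))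
    have := key_pow j k
    simpa [θf] using this
  -- smoothness
  have hcd : ContDiff ℝ (⊤ : ℕ∞) (fun t : ℝ => x + ∑' j, uf Δ W j t) := by
    refine ContDiff.add contDiff_const ?_
    exact contDiff_tsum (fun j => uf_contDiff Δ W j) (fun k _ => hv k)
      (fun k j t _ => hbound k j t)
  -- pointwise summability
  have husum : ∀ t : ℝ, Summable (fun j => uf Δ W j t) := by
    intro t
    refine Summable.of_norm_bounded (hv 0) (fun j => ?_)
    have h := hbound 0 j t
    rwa [norm_iteratedFDeriv_zero] at h
  -- pointwise norm bound
  have hunorm : ∀ (j : ℕ) (t : ℝ), ‖uf Δ W j t‖ ≤ 4 * r * θf j := by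
    intro j t
    have h1 : ‖Real.smoothTransition ((t - Af j)/ηf j) • Δ j‖ ≤ 2 * (r * θf j) := by
      rw [norm_smul, Real.norm_eq_abs,
        abs_of_nonneg (Real.smoothTransition.nonneg _)]
      calc Real.smoothTransition ((t - Af j)/ηf j) * ‖Δ j‖ ≤ 1 * (2 * (r * θf j)) :=
            mul_le_mul (Real.smoothTransition.le_one _) (hΔ j) (norm_nonneg _) zero_le_one
        _ = 2 * (r * θf j) := by ring
    have h2 : ‖Fp ((t - Bf j)/ηf j) • W j‖ ≤ 2 * (r * θf j) := by
      rw [norm_smul, Real.norm_eq_abs]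
      exact mul_le_mul (Fp_abs _) (hW j) (norm_nonneg _) (by norm_num)
    calc ‖uf Δ W j t‖ ≤ ‖Real.smoothTransition ((t - Af j)/ηf j) • Δ j‖
          + ‖Fp ((t - Bf j)/ηf j) • W j‖ := norm_add_le _ _
      _ ≤ 2 * (r * θf j) + 2 * (r * θf j) := add_le_add h1 h2
      _ = 4 * r * θf j := by ring
  -- the curve
  refine ⟨fun t => x + ∑' j, uf Δ W j t, hcd, ?_, ?_⟩
  · -- stays in the ball
    intro t
    have h0 : (x + ∑' j, uf Δ W j t) - x = ∑' j, uf Δ W j t := by abel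
    rw [h0]
    have hsn : Summable (fun j => ‖uf Δ W j t‖) :=
      Summable.of_nonneg_of_le (fun j => norm_nonneg _) (fun j => hunorm j t)
        (summable_θf.mul_left (4*r))
    have h1 : ‖∑' j, uf Δ W j t‖ ≤ ∑' j, ‖uf Δ W j t‖ := norm_tsum_le_tsum_norm hsn
    have h2 : ∑' j, ‖uf Δ W j t‖ ≤ ∑' j, 4 * r * θf j :=
      Summable.tsum_le_tsum (fun j => hunorm j t) hsn (summable_θf.mul_left (4*r))
    have h3 : ∑' j : ℕ, 4 * r * θf j = 4 * r * ∑' j, θf j := tsum_mul_left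
    have h4 : 4 * r * ∑' j, θf j ≤ 4 * r * (1/32) :=
      mul_le_mul_of_nonneg_left tsum_θf_le (by linarith)
    rw [h3] at h2
    linarith
  · -- values
    intro j τ hτ0 hτη
    have hcase : ∀ i, uf Δ W i (Tf j + τ)
        = (if j ≤ i then Δ i else 0) + (if i = j then (τ / ηf j) • W j else 0) := by
      intro i
      rcases lt_trichotomy i j with hij | hij | hij
      · rw [uf_eval_lt Δ W hij hτ0 hτη, if_neg (not_le.mpr hij), if_neg (ne_of_lt hij)]
        simp
      · subst hij
        rw [uf_eval_eq Δ W i hτ0 hτη, if_pos (le_refl i), if_pos rfl]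
      · rw [uf_eval_gt Δ W hij hτ0 hτη, if_pos hij.le, if_neg (ne_of_gt hij)]
        simp
    have hS1 : Summable (fun i => if j ≤ i then Δ i else 0) := by
      refine Summable.of_norm_bounded (summable_θf.mul_left (2*r)) (fun i => ?_)
      by_cases h : j ≤ i
      · rw [if_pos h]
        calc ‖Δ i‖ ≤ 2 * (r * θf i) := hΔ i
          _ = 2 * r * θf i := by ring
      · rw [if_neg h, norm_zero]
        exact mul_nonneg (by linarith) (θf_pos i).le
    have hS2 : Summable (fun i => if i = j then (τ / ηf j) • W j else 0) := by
      apply summable_of_ne_finset_zero (s := {j})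
      intro i hi
      rw [if_neg (by simpa using hi)]
    have hsum1 : ∑' i, (if j ≤ i then Δ i else 0) = p j - x := by
      have hΔsum : Summable Δ := by
        refine Summable.of_norm_bounded (summable_θf.mul_left (2*r)) (fun i => ?_)
        calc ‖Δ i‖ ≤ 2 * (r * θf i) := hΔ i
          _ = 2 * r * θf i := by ring
      have hshift := Summable.sum_add_tsum_nat_add (f := fun i => if j ≤ i then Δ i else 0) j hS1
      have hrange : ∑ i ∈ range j, (if j ≤ i then Δ i else 0) = 0 := by
        apply Finset.sum_eq_zero
        intro i hi
        rw [if_neg (not_le.mpr (Finset.mem_range.mp hi))]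
      have htail : (fun i : ℕ => if j ≤ i + j then Δ (i + j) else 0) = fun i => Δ (i + j) := by
        funext i
        rw [if_pos (Nat.le_add_left j i)]
      -- limit of p
      have hplim : Tendsto p atTop (𝓝 x) := by
        rw [← tendsto_sub_nhds_zero_iff]
        apply squeeze_zero_norm (fun n => hp n)
        have hθ0 : Tendsto (fun n : ℕ => r * θf n) atTop (𝓝 (r * 0)) := by
          apply Tendsto.const_mul
          apply squeeze_zero (fun n => (θf_pos n).le) (fun n => θf_le n)
          have : Tendsto (fun n : ℕ => (2:ℝ)⁻¹ ^ n) atTop (𝓝 0) :=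
            tendsto_pow_atTop_nhds_zero_of_lt_one (by norm_num) (by norm_num)
          have h6 := this.comp (tendsto_add_atTop_nat 6)
          exact h6
        simpa using hθ0
      have htel : ∑' i : ℕ, Δ (i + j) = p j - x := by
        have hq : (fun i : ℕ => Δ (i + j)) = fun i : ℕ => p (i + j) - p ((i+1) + j) := by
          funext i
          simp only [hΔdef]
          have hn : i + 1 + j = i + j + 1 := by omega
          rw [hn]
        have hres := tsum_telescope (fun i : ℕ => p (i + j)) x
          (by rw [← hq]; exact (summable_nat_add_iff j).mpr hΔsum)
          (hplim.comp (tendsto_add_atTop_nat j))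
        rw [← hq] at hres
        simpa using hres
      rw [← hshift, hrange, zero_add, htail, htel]
    have hsum2 : ∑' i, (if i = j then (τ / ηf j) • W j else 0) = (τ / ηf j) • W j := by
      rw [tsum_eq_single j (fun b hb => if_neg hb), if_pos rfl]
    show (x + ∑' i, uf Δ W i (Tf j + τ)) = p j + (τ / ηf j) • W j
    calc (x + ∑' i, uf Δ W i (Tf j + τ))
        = x + ∑' i, ((if j ≤ i then Δ i else 0) + (if i = j then (τ / ηf j) • W j else 0)) := by
          rw [tsum_congr hcase]
      _ = x + ((p j - x) + (τ / ηf j) • W j) := by rw [Summable.tsum_add hS1 hS2, hsum1, hsum2]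
      _ = p j + (τ / ηf j) • W j := by abel
variable {d : ℕ} {α : ℝ} {U : Set (EuclideanSpace ℝ (Fin d))}
  {f : EuclideanSpace ℝ (Fin d) → ℝ}

lemma Tf_mem_Icc (j : ℕ) : Tf j ∈ Set.Icc (0:ℝ) 1 := by
  have h1 := wf_pos j
  have h2 := wf_le_one j
  constructor <;> (simp only [Tf]; linarith)

lemma Tf_add_mem_Icc {j : ℕ} {τ : ℝ} (hτ0 : 0 ≤ τ) (hτη : τ ≤ ηf j) :
    Tf j + τ ∈ Set.Icc (0:ℝ) 1 := by
  have h1 := wf_pos j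
  have h2 := wf_le_one j
  have h3 : ηf j = wf j / 16 := rfl
  rw [h3] at hτη
  constructor <;> (simp only [Tf]; linarith)

lemma bounded_of_curves
    (H : ∀ c : ℝ → EuclideanSpace ℝ (Fin d), ContDiff ℝ (⊤ : ℕ∞) c → (∀ t, c t ∈ U) →
      HolderZeroR α (f ∘ c))
    (hα : α ∈ Set.Ioc (0:ℝ) 1)
    {K : Set (EuclideanSpace ℝ (Fin d))} (hK : IsCompact K)
    {r : ℝ} (hr : 0 < r) (hball : ∀ z ∈ K, Metric.ball z r ⊆ U) :
    ∃ M : ℝ, ∀ z ∈ K, |f z| ≤ M := by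
  by_contra hcon
  push_neg at hcon
  have hz : ∀ n : ℕ, ∃ z, z ∈ K ∧ (n:ℝ) < |f z| := fun n => by
    obtain ⟨z, hz1, hz2⟩ := hcon n
    exact ⟨z, hz1, hz2⟩
  choose z hzK hzf using hz
  obtain ⟨x, hxK, φ, hφ, hφlim⟩ := hK.tendsto_subseq hzK
  obtain ⟨ψ, hψ, hψrate⟩ := exists_rate_subseq (fun n => z (φ n)) x hφlim
    (fun j => r * θf j) (fun j => mul_pos hr (θf_pos j))
  obtain ⟨c, hcd, hcball, hcval⟩ := curve_exists x (fun j => z (φ (ψ j))) (fun _ => 0) r hr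
    hψrate (fun j => by simpa using (mul_pos hr (θf_pos j)).le)
  have hcU : ∀ t, c t ∈ U := by
    intro t
    apply hball x hxK
    rw [Metric.mem_ball, dist_eq_norm]
    exact hcball t
  obtain ⟨C, hC⟩ := H c hcd hcU (Set.Icc 0 1) isCompact_Icc
  have hcT : ∀ j, c (Tf j) = z (φ (ψ j)) := by
    intro j
    have h := hcval j 0 le_rfl (ηf_pos j).le
    simpa using h
  -- uniform bound on the subsequence
  have hbd : ∀ j : ℕ, 1 ≤ j → |f (z (φ (ψ j)))| ≤ |f (z (φ (ψ 0)))| + max C 0 := by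
    intro j hj
    have harg : Tf j + (Tf 0 - Tf j) = Tf 0 := by ring
    have hne : Tf 0 - Tf j ≠ 0 := by
      have h1 : wf j ≤ wf 1 := wf_mono hj
      have hw1 : wf 1 = 2⁻¹ := pow_one _
      have hw0 : wf 0 = 1 := pow_zero _
      simp only [Tf]
      intro hcontra
      rw [sub_eq_zero] at hcontra
      rw [hw1] at h1
      rw [hw0] at hcontra
      linarith
    have h := hC (Tf j) (Tf 0 - Tf j) (Tf_mem_Icc j)
      (by rw [harg]; exact Tf_mem_Icc 0) hne
    rw [harg] at h
    simp only [Function.comp_apply, hcT] at h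
    have habs : |Tf 0 - Tf j| ^ α ≤ 1 := by
      apply Real.rpow_le_one (abs_nonneg _) _ hα.1.le
      rw [abs_le]
      have h1 := wf_pos j
      have h2 := wf_le_one j
      have hw0 : wf 0 = 1 := pow_zero _
      constructor <;> (simp only [Tf] ; linarith)
    have hCb : C * |Tf 0 - Tf j| ^ α ≤ max C 0 := by
      calc C * |Tf 0 - Tf j| ^ α ≤ max C 0 * |Tf 0 - Tf j| ^ α :=
            mul_le_mul_of_nonneg_right (le_max_left _ _) (Real.rpow_nonneg (abs_nonneg _) _)
        _ ≤ max C 0 * 1 := mul_le_mul_of_nonneg_left habs (le_max_right _ _)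
        _ = max C 0 := mul_one _
    have htri := abs_sub_abs_le_abs_sub (f (z (φ (ψ j)))) (f (z (φ (ψ 0))))
    rw [abs_sub_comm] at htri
    linarith
  obtain ⟨m, hm⟩ := exists_nat_gt (|f (z (φ (ψ 0)))| + max C 0)
  have h1 := hbd (m+1) (by omega)
  have h2 := hzf (φ (ψ (m+1)))
  have h3 : ((m+1 : ℕ) : ℝ) ≤ (φ (ψ (m+1)) : ℝ) := by
    exact_mod_cast le_trans hψ.le_apply hφ.le_apply
  push_cast at h2 h3 hm ⊢
  linarith
lemma hard_dir (hα : α ∈ Set.Ioc (0:ℝ) 1) (hU : IsOpen U)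
    (H : ∀ c : ℝ → EuclideanSpace ℝ (Fin d), ContDiff ℝ (⊤ : ℕ∞) c → (∀ t, c t ∈ U) →
      HolderZeroR α (f ∘ c)) :
    HolderZeroOn d α f U := by
  intro K hKU hK
  by_contra hcon
  push_neg at hcon
  -- a uniform radius around K inside U
  obtain ⟨r₀, hr₀, hthick⟩ := hK.exists_thickening_subset_open hU hKU
  set r : ℝ := min r₀ 1 with hrdef
  have hr : 0 < r := lt_min hr₀ one_pos
  have hballs : ∀ z ∈ K, Metric.ball z r ⊆ U := by
    intro z hz
    refine subset_trans (Metric.ball_subset_ball (min_le_left _ _)) ?_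
    exact subset_trans (Metric.ball_subset_thickening hz r₀) hthick
  -- boundedness of f on K
  obtain ⟨M₀, hM₀⟩ := bounded_of_curves H hα hK hr hballs
  set M : ℝ := max M₀ 0 with hMdef
  have hM0 : 0 ≤ M := le_max_right _ _
  have hMb : ∀ z ∈ K, |f z| ≤ M := fun z hz => (hM₀ z hz).trans (le_max_left _ _)
  -- constants
  set S : ℕ → ℝ := fun j => r * θf j with hSdef
  have hSpos : ∀ j, 0 < S j := fun j => mul_pos hr (θf_pos j)
  set Q : ℕ → ℝ := fun j => (2*M+1) * 2^j / (S j) ^ α with hQdef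
  have hQpos : ∀ j, 0 < Q j := fun j =>
    div_pos (by positivity) (Real.rpow_pos_of_pos (hSpos j) α)
  have hQS : ∀ j, Q j * (S j) ^ α = (2*M+1) * 2^j := fun j =>
    div_mul_cancel₀ _ (ne_of_gt (Real.rpow_pos_of_pos (hSpos j) α))
  have hQmono : ∀ i j : ℕ, i ≤ j → Q i ≤ Q j := by
    intro i j hij
    have hnum : (2*M+1) * 2^i ≤ (2*M+1) * 2^j :=
      mul_le_mul_of_nonneg_left (pow_le_pow_right₀ (by norm_num) hij) (by linarith)
    have hden : (S j) ^ α ≤ (S i) ^ α :=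
      Real.rpow_le_rpow (hSpos j).le
        (mul_le_mul_of_nonneg_left (θf_mono hij) hr.le) hα.1.le
    exact div_le_div₀ (by positivity) hnum (Real.rpow_pos_of_pos (hSpos j) α) hden
  -- choose violating pairs
  choose a v h1 h2 h3 h4 using fun j : ℕ => hcon (Q j)
  -- convergent subsequence with rate
  obtain ⟨x, hxK, φ, hφ, hφlim⟩ := hK.tendsto_subseq h1
  obtain ⟨ψ, hψ, hrate⟩ := exists_rate_subseq (fun m => a (φ m)) x hφlim
    (fun j => r * θf j) (fun j => mul_pos hr (θf_pos j))
  set n : ℕ → ℕ := fun j => φ (ψ j) with hndef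
  have hn : ∀ j, j ≤ n j := fun j => le_trans hψ.le_apply hφ.le_apply
  set δ : ℕ → ℝ := fun j => ‖v (n j)‖ with hδdef
  have hδpos : ∀ j, 0 < δ j := fun j => norm_pos_iff.mpr (h3 (n j))
  have h2M : ∀ m : ℕ, |f (a m + v m) - f (a m)| ≤ 2 * M := by
    intro m
    calc |f (a m + v m) - f (a m)| ≤ |f (a m + v m)| + |f (a m)| := abs_sub _ _
      _ ≤ M + M := add_le_add (hMb _ (h2 m)) (hMb _ (h1 m))
      _ = 2 * M := by ring
  -- the gap is much smaller than the slot amplitude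
  have hδS : ∀ j, δ j < S j := by
    intro j
    by_contra hge
    push_neg at hge
    have hα' : (S j) ^ α ≤ (δ j) ^ α := Real.rpow_le_rpow (hSpos j).le hge hα.1.le
    have hlt := h4 (n j)
    have hQn := hQmono j (n j) (hn j)
    have hδα : (0:ℝ) ≤ (δ j) ^ α := Real.rpow_nonneg (hδpos j).le _
    have hlt' : Q (n j) * (δ j) ^ α < |f (a (n j) + v (n j)) - f (a (n j))| := hlt
    have hcalc : (2*M+1) * 2^j ≤ Q (n j) * (δ j) ^ α := by
      calc (2*M+1) * 2^j = Q j * (S j) ^ α := (hQS j).symm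
        _ ≤ Q j * (δ j) ^ α := mul_le_mul_of_nonneg_left hα' (hQpos j).le
        _ ≤ Q (n j) * (δ j) ^ α := mul_le_mul_of_nonneg_right hQn hδα
    have h2j : (1:ℝ) ≤ 2^j := one_le_pow₀ (by norm_num)
    have := (h2M (n j))
    nlinarith [hlt']
  -- the sweep vectors
  set W : ℕ → EuclideanSpace ℝ (Fin d) := fun j => ((S j) / (δ j)) • v (n j) with hWdef
  have hWnorm : ∀ j, ‖W j‖ = r * θf j := by
    intro j
    rw [hWdef]
    rw [norm_smul, Real.norm_eq_abs, abs_of_pos (div_pos (hSpos j) (hδpos j))]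
    rw [div_mul_cancel₀ _ (ne_of_gt (hδpos j))]
  -- the curve
  obtain ⟨c, hcd, hcball, hcval⟩ := curve_exists x (fun j => a (n j)) W r hr hrate
    (fun j => le_of_eq (hWnorm j))
  have hcU : ∀ t, c t ∈ U := by
    intro t
    apply hballs x hxK
    rw [Metric.mem_ball, dist_eq_norm]
    exact hcball t
  obtain ⟨C, hC⟩ := H c hcd hcU (Set.Icc 0 1) isCompact_Icc
  -- derive `2^j < C` for every j
  have hkey : ∀ j : ℕ, (2:ℝ)^j < C := by
    intro j
    set τ : ℝ := δ j * ηf j / S j with hτdef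
    have hη := ηf_pos j
    have hτpos : 0 < τ := by
      rw [hτdef]; exact div_pos (mul_pos (hδpos j) hη) (hSpos j)
    have hτη : τ ≤ ηf j := by
      rw [hτdef]
      rw [div_le_iff₀ (hSpos j)]
      have := hδS j
      nlinarith
    -- curve values
    have hv0 : c (Tf j) = a (n j) := by
      have h := hcval j 0 le_rfl hη.le
      simpa using h
    have hv1 : c (Tf j + τ) = a (n j) + v (n j) := by
      have h := hcval j τ hτpos.le hτη
      rw [h]
      congr 1
      have hτη' : τ / ηf j = δ j / S j := by
        rw [hτdef, div_div, mul_comm (S j) (ηf j), ← div_div,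
          mul_div_assoc, div_self (ne_of_gt hη), mul_one]
      have hone : (δ j / S j) * (S j / δ j) = 1 := by
        rw [div_mul_div_comm, mul_comm (δ j) (S j), div_self (ne_of_gt (mul_pos (hSpos j) (hδpos j)))]
      rw [hτη', hWdef, smul_smul, hone, one_smul]
    -- Hölder estimate along the curve
    have h := hC (Tf j) τ (Tf_mem_Icc j) (Tf_add_mem_Icc hτpos.le hτη) (ne_of_gt hτpos)
    simp only [Function.comp_apply, hv0, hv1] at h
    -- the violating pair estimate
    have hlt := h4 (n j)
    have hlt' : Q (n j) * (δ j) ^ α < |f (a (n j) + v (n j)) - f (a (n j))| := hlt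
    have hQn := hQmono j (n j) (hn j)
    have hδα : (0:ℝ) < (δ j) ^ α := Real.rpow_pos_of_pos (hδpos j) _
    have hSα : (0:ℝ) < (S j) ^ α := Real.rpow_pos_of_pos (hSpos j) _
    have hηα : (0:ℝ) < (ηf j) ^ α := Real.rpow_pos_of_pos hη _
    have hchain : Q j * (δ j) ^ α < C * |τ| ^ α := by
      calc Q j * (δ j) ^ α ≤ Q (n j) * (δ j) ^ α := mul_le_mul_of_nonneg_right hQn hδα.le
        _ < |f (a (n j) + v (n j)) - f (a (n j))| := hlt'
        _ ≤ C * |τ| ^ α := h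
    have hτα : |τ| ^ α = (δ j) ^ α * (ηf j) ^ α / (S j) ^ α := by
      rw [abs_of_pos hτpos, hτdef, Real.div_rpow (by positivity) (hSpos j).le,
        Real.mul_rpow (hδpos j).le hη.le]
    -- cross-multiply
    have hstep : (2*M+1) * 2^j * (δ j) ^ α < C * (ηf j) ^ α * (δ j) ^ α := by
      have hmul := mul_lt_mul_of_pos_right hchain hSα
      calc (2*M+1) * 2^j * (δ j) ^ α = Q j * (δ j) ^ α * (S j) ^ α := by
            rw [← hQS j]; ring
        _ < C * |τ| ^ α * (S j) ^ α := hmul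
        _ = C * (ηf j) ^ α * (δ j) ^ α := by
            rw [hτα]
            field_simp
    have hstep2 : (2*M+1) * 2^j < C * (ηf j) ^ α :=
      lt_of_mul_lt_mul_right hstep hδα.le
    have hCpos : 0 < C := by
      have hpos : (0:ℝ) < (2*M+1) * 2^j := by positivity
      by_contra hc
      push_neg at hc
      have := mul_nonpos_of_nonpos_of_nonneg hc hηα.le
      linarith
    have hη1 : (ηf j) ^ α ≤ 1 := Real.rpow_le_one hη.le (ηf_le_one j) hα.1.le
    have hCη : C * (ηf j) ^ α ≤ C := mul_le_of_le_one_right hCpos.le hη1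
    have h2' : (2:ℝ)^j ≤ (2*M+1) * 2^j :=
      le_mul_of_one_le_left (by positivity) (by linarith)
    linarith
  obtain ⟨m, hm⟩ := pow_unbounded_of_one_lt C (one_lt_two (α := ℝ))
  exact absurd (hkey m) (not_lt.mpr hm.le)
lemma easy_dir (hα : α ∈ Set.Ioc (0:ℝ) 1) (hH : HolderZeroOn d α f U) :
    ∀ c : ℝ → EuclideanSpace ℝ (Fin d), ContDiff ℝ (⊤ : ℕ∞) c → (∀ t, c t ∈ U) →
      HolderZeroR α (f ∘ c) := by
  intro c hc hcU K hK
  obtain ⟨R₀, hR₀⟩ := hK.isBounded.subset_closedBall 0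
  set R : ℝ := max R₀ 1 with hRdef
  have hR1 : (0:ℝ) < R := lt_of_lt_of_le one_pos (le_max_right _ _)
  have hKI : K ⊆ Set.Icc (-R) R := by
    have hRR : R₀ ≤ R := le_max_left _ _
    refine subset_trans hR₀ ?_
    rw [Real.closedBall_eq_Icc]
    apply Set.Icc_subset_Icc <;> simp <;> linarith
  -- the image compact set
  have hKc : IsCompact (c '' Set.Icc (-R) R) := (isCompact_Icc).image hc.continuous
  have hKcU : c '' Set.Icc (-R) R ⊆ U := by
    rintro y ⟨t, _, rfl⟩
    exact hcU t
  obtain ⟨C₀, hC₀⟩ := hH (c '' Set.Icc (-R) R) hKcU hKc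
  -- Lipschitz bound for c on the interval
  have hfder : Continuous (fderiv ℝ c) := hc.continuous_fderiv (by simp)
  obtain ⟨L₀, hL₀⟩ := (isCompact_Icc (a := -R) (b := R)).exists_bound_of_continuousOn
    hfder.continuousOn
  set L : ℝ := max L₀ 0 with hLdef
  have hL0 : 0 ≤ L := le_max_right _ _
  have hlip : ∀ s ∈ Set.Icc (-R) R, ∀ t ∈ Set.Icc (-R) R, ‖c t - c s‖ ≤ L * |t - s| := by
    intro s hs t ht
    have := Convex.norm_image_sub_le_of_norm_fderiv_le
      (f := c) (s := Set.Icc (-R) R) (C := L)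
      (fun y _ => hc.differentiable (by simp) y)
      (fun y hy => (hL₀ y hy).trans (le_max_left _ _)) (convex_Icc _ _) ht hs
    simpa [Real.norm_eq_abs, norm_sub_rev, abs_sub_comm] using this
  refine ⟨max C₀ 0 * L ^ α, ?_⟩
  intro x h hx hxh hne
  have hxI := hKI hx
  have hxhI := hKI hxh
  have hd : ‖c (x + h) - c x‖ ≤ L * |h| := by
    have := hlip x hxI (x + h) hxhI
    simpa [add_sub_cancel_left] using this
  rcases eq_or_ne (c (x + h)) (c x) with he | he
  · simp only [Function.comp_apply, he, sub_self, abs_zero]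
    have h1 : (0:ℝ) ≤ L ^ α := Real.rpow_nonneg hL0 α
    have h2 : (0:ℝ) ≤ |h| ^ α := Real.rpow_nonneg (abs_nonneg _) α
    positivity
  · have key := hC₀ (c x) (c (x + h) - c x) ⟨x, hxI, rfl⟩
      (by rw [show c x + (c (x+h) - c x) = c (x+h) by abel]; exact ⟨x + h, hxhI, rfl⟩)
      (sub_ne_zero.mpr he)
    rw [show c x + (c (x+h) - c x) = c (x+h) by abel] at key
    have hstep : ‖c (x+h) - c x‖ ^ α ≤ (L * |h|) ^ α :=
      Real.rpow_le_rpow (norm_nonneg _) hd hα.1.le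
    have hmul : (L * |h|) ^ α = L ^ α * |h| ^ α := Real.mul_rpow hL0 (abs_nonneg _)
    calc |(f ∘ c) (x + h) - (f ∘ c) x| = |f (c (x+h)) - f (c x)| := rfl
      _ ≤ C₀ * ‖c (x+h) - c x‖ ^ α := key
      _ ≤ max C₀ 0 * ‖c (x+h) - c x‖ ^ α :=
          mul_le_mul_of_nonneg_right (le_max_left _ _) (Real.rpow_nonneg (norm_nonneg _) _)
      _ ≤ max C₀ 0 * (L * |h|) ^ α :=
          mul_le_mul_of_nonneg_left hstep (le_max_right _ _)
      _ = max C₀ 0 * L ^ α * |h| ^ α := by rw [hmul]; ring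

end

end HolderAux


/-- **Lemma 3.4.** For `α ∈ (0,1]`, `U ⊆ ℝ^d` open, and `f : U → ℝ`, `f ∘ c ∈ C^{0,α}(ℝ)` for
every smooth curve `c : ℝ → U` if and only if `f ∈ C^{0,α}(U)`. -/
theorem holder_zero_testing_on_smooth_curves (d : ℕ) (α : ℝ) (hα : α ∈ Set.Ioc (0 : ℝ) 1)
    (U : Set (EuclideanSpace ℝ (Fin d))) (hU : IsOpen U)
    (f : EuclideanSpace ℝ (Fin d) → ℝ) :
    (∀ c : ℝ → EuclideanSpace ℝ (Fin d), ContDiff ℝ (⊤ : ℕ∞) c → (∀ t, c t ∈ U) →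
        HolderZeroR α (f ∘ c)) ↔
      HolderZeroOn d α f U := by
  constructor
  · intro H
    exact HolderAux.hard_dir hα hU H
  · intro hH
    exact HolderAux.easy_dir hα hH
end
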